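/- arXiv:2502.03241 — 13 statements merged into one kernel-verified Lean document; each statement's English description precedes it below -/
import Mathlib

section
/- Let n ≥ 2 and m ≥ 1 be integers and let X be an n×m Latin hypercube design. Then the minimum pairwise L1-distance of X satisfies d_1(X) ≤ ⌊(n+1)m/3⌋. -/
/-!
Each column of a Latin hypercube design is a permutation of `1, …, n`, so summing
`|x_{ik} - x_{jk}|` over all ordered pairs of rows gives
`∑_{a,b ≤ n} |a - b| = (n - 1) n (n + 1) / 3` for every column. Hence the `n (n - 1)` ordered
pairs of distinct rows have total `L1`-distance `n (n - 1) (n + 1) m / 3`, and one of them has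
distance at most the average `(n + 1) m / 3`.
-/

open Finset

lemma sum_Icc_succ_sub_mul_two (n : ℕ) :
    (∑ b ∈ Icc 1 n, ((n : ℤ) + 1 - b)) * 2 = n * (n + 1) := by
  induction n with
  | zero => simp
  | succ n ih =>
    rw [sum_Icc_succ_top (by omega)]
    have hshift : ∑ b ∈ Icc 1 n, (((n + 1 : ℕ) : ℤ) + 1 - b)
        = ∑ b ∈ Icc 1 n, ((n : ℤ) + 1 - b) + n := by
      simp [add_sub_right_comm _ (1 : ℤ), sum_add_distrib]
    push_cast at hshift ⊢
    linarith

lemma three_mul_sum_Icc_abs_sub (n : ℕ) :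
    3 * ∑ a ∈ Icc 1 n, ∑ b ∈ Icc 1 n, |(a : ℤ) - b| = (n - 1) * n * (n + 1) := by
  induction n with
  | zero => simp
  | succ n ih =>
    simp only [sum_Icc_succ_top (show 1 ≤ n + 1 by omega), sum_add_distrib, sub_self, abs_zero,
      add_zero]
    have hrow : ∀ a ∈ Icc 1 n, |((n + 1 : ℕ) : ℤ) - a| = n + 1 - a := fun a ha => by
      have := (mem_Icc.1 ha).2
      rw [abs_of_nonneg (by omega)]
      push_cast
      ring
    rw [sum_congr rfl hrow, sum_congr rfl fun a ha => (abs_sub_comm _ _).trans (hrow a ha)]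
    push_cast
    linear_combination ih + 3 * sum_Icc_succ_sub_mul_two n

lemma sum_sum_comp_eq_sum_sum_image {ι α β : Type*} [Fintype ι] [DecidableEq α]
    [AddCommMonoid β]
    {x : ι → α} (hx : Function.Injective x) (g : α → α → β) :
    ∑ i, ∑ j, g (x i) (x j) = ∑ a ∈ univ.image x, ∑ b ∈ univ.image x, g a b := by
  simp only [sum_image hx.injOn]

lemma three_mul_sum_sum_abs_sub_of_image_eq_Icc {n : ℕ} {x : Fin n → ℕ}
    (hx : univ.image x = Icc 1 n) :
    3 * ∑ i, ∑ j, |(x i : ℤ) - x j| = (n - 1) * n * (n + 1) := by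
  have hinj : Function.Injective x := by
    simpa using injOn_of_card_image_eq (s := univ) (f := x) (by simp [hx])
  rw [sum_sum_comp_eq_sum_sum_image hinj (fun a b : ℕ => |(a : ℤ) - b|), hx]
  exact three_mul_sum_Icc_abs_sub n

lemma exists_ne_le_of_sum_sum_le {ι : Type*} [Fintype ι] [DecidableEq ι]
    (hι : 2 ≤ Fintype.card ι) (d : ι → ι → ℕ) (c : ℕ)
    (h : ∑ i, ∑ j, d i j ≤ Fintype.card ι * (Fintype.card ι - 1) * c) :
    ∃ i j, i ≠ j ∧ d i j ≤ c := by
  have hne : (univ : Finset ι).offDiag.Nonempty := by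
    obtain ⟨i, j, hij⟩ := Fintype.exists_pair_of_one_lt_card hι
    exact ⟨(i, j), by simpa using hij⟩
  obtain ⟨⟨i, j⟩, hij, hle⟩ :=
    exists_le_of_sum_le hne (f := fun p => d p.1 p.2) (g := fun _ => c) <|
    calc ∑ p ∈ univ.offDiag, d p.1 p.2
        _ ≤ ∑ p ∈ univ ×ˢ univ, d p.1 p.2 := sum_le_sum_of_subset <| by
          rw [← product_sdiff_diag]; exact sdiff_subset
        _ = ∑ i, ∑ j, d i j := sum_product _ _ _
        _ ≤ Fintype.card ι * (Fintype.card ι - 1) * c := h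
        _ = ∑ _p ∈ univ.offDiag, c := by
          rw [sum_const, offDiag_card, card_univ, smul_eq_mul, Nat.mul_sub_one]
  exact ⟨i, j, (mem_offDiag.1 hij).2.2, hle⟩

theorem stmt_0_general (n m : ℕ) (hn : 2 ≤ n)
    (X : Fin n → Fin m → ℕ)
    (hX : ∀ j : Fin m, Finset.image (fun i => X i j) Finset.univ = Finset.Icc 1 n) :
    ∃ i i' : Fin n, i ≠ i' ∧
      (∑ k : Fin m, ((X i k : ℤ) - (X i' k : ℤ)).natAbs) ≤ (n + 1) * m / 3 := by
  have hsum : ∑ i, ∑ i', 3 * ∑ k, ((X i k : ℤ) - X i' k).natAbs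
      = Fintype.card (Fin n) * (Fintype.card (Fin n) - 1) * ((n + 1) * m) := by
    rw [Fintype.card_fin]
    zify [hn.trans' one_le_two]
    calc ∑ i, ∑ i', 3 * ∑ k, |(X i k : ℤ) - X i' k|
        _ = ∑ k, 3 * ∑ i, ∑ i', |(X i k : ℤ) - X i' k| := by
          simp only [mul_sum]
          exact (sum_congr rfl fun _ _ => sum_comm).trans sum_comm
        _ = ∑ _k : Fin m, ((n : ℤ) - 1) * n * (n + 1) :=
          sum_congr rfl fun k _ => three_mul_sum_sum_abs_sub_of_image_eq_Icc (hX k)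
        _ = n * (n - 1) * ((n + 1) * m) := by
          rw [sum_const, card_univ, Fintype.card_fin, nsmul_eq_mul]
          ring
  obtain ⟨i, i', hii', hle⟩ := exists_ne_le_of_sum_sum_le (by simpa using hn) _ _ hsum.le
  exact ⟨i, i', hii', (Nat.le_div_iff_mul_le three_pos).2 (by linarith)⟩

/-- For an `n × m` Latin hypercube design (every column is a permutation
of `{1,…,n}`) with `n ≥ 2`, `m ≥ 1`, the minimum pairwise `L1`-distance is at most
`⌊(n+1)m/3⌋`, i.e. some pair of distinct rows has `L1`-distance at most `(n+1)*m/3`. -/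
theorem stmt_0 (n m : ℕ) (hn : 2 ≤ n) (hm : 1 ≤ m)
    (X : Fin n → Fin m → ℕ)
    (hX : ∀ j : Fin m, Finset.image (fun i => X i j) Finset.univ = Finset.Icc 1 n) :
    ∃ i i' : Fin n, i ≠ i' ∧
      (∑ k : Fin m, ((X i k : ℤ) - (X i' k : ℤ)).natAbs) ≤ (n + 1) * m / 3 :=
  stmt_0_general n m hn X hX
end

section
/- Let n ≥ 2 and m ≥ 1 be integers and let X be an n×m Latin hypercube design. Then the minimum over all pairs of distinct rows x_i, x_j of the squared L2-distance Σ_{k=1}^m (x_{ik} − x_{jk})² is at most ⌊n(n+1)m/6⌋. -/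
/-!
Summing the squared distance over all ordered pairs of rows and exchanging the order of
summation, each column contributes `∑_{a,b ∈ [1,n]} (a - b)² = n²(n² - 1)/6`, whatever the
design. Averaging over the `n(n - 1)` pairs of distinct rows (the diagonal contributes `0`),
some such pair is at squared distance at most `m n(n + 1)/6`.
-/

open Finset

theorem Finset.sum_sum_sub_sq {ι R : Type*} [CommRing R] (s : Finset ι) (f : ι → R) :
    ∑ a ∈ s, ∑ b ∈ s, (f a - f b) ^ 2 = 2 * (#s * ∑ a ∈ s, f a ^ 2 - (∑ a ∈ s, f a) ^ 2) := by
  simp only [sub_sq, sum_add_distrib, sum_sub_distrib, sum_const, ← mul_sum, ← sum_mul,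
    nsmul_eq_mul]
  ring

theorem Finset.exists_card_nsmul_le_sum {ι R : Type*} [AddCommMonoid R] [LinearOrder R]
    [IsOrderedAddMonoid R] {s : Finset ι} (hs : s.Nonempty) (f : ι → R) :
    ∃ i ∈ s, #s • f i ≤ ∑ j ∈ s, f j := by
  obtain ⟨i, hi, hmin⟩ := s.exists_min_image f hs
  exact ⟨i, hi, card_nsmul_le_sum s f (f i) hmin⟩

theorem two_mul_sum_Icc_one_id (n : ℕ) : 2 * ∑ a ∈ Icc 1 n, (a : ℤ) = n * (n + 1) := by
  induction n with
  | zero => simp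
  | succ n ih => rw [sum_Icc_succ_top (by omega), mul_add, ih]; push_cast; ring

theorem six_mul_sum_Icc_one_sq (n : ℕ) :
    6 * ∑ a ∈ Icc 1 n, (a : ℤ) ^ 2 = n * (n + 1) * (2 * n + 1) := by
  induction n with
  | zero => simp
  | succ n ih => rw [sum_Icc_succ_top (by omega), mul_add, ih]; push_cast; ring

theorem Fintype.sum_comp_eq_sum_of_image_eq {ι α M : Type*} [Fintype ι] [DecidableEq α]
    [AddCommMonoid M] {g : ι → α} {t : Finset α} (hg : univ.image g = t)
    (hcard : #t = Fintype.card ι) (f : α → M) :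
    ∑ i, f (g i) = ∑ a ∈ t, f a := by
  have hinj : Set.InjOn g (univ : Finset ι) := by rwa [← card_image_iff, hg]
  rw [← hg, sum_image hinj]

theorem six_mul_sum_sum_sub_sq_of_image_eq_Icc {n : ℕ} {g : Fin n → ℕ}
    (hg : univ.image g = Icc 1 n) :
    6 * ∑ i, ∑ i', ((g i : ℤ) - g i') ^ 2 = n ^ 2 * (n ^ 2 - 1) := by
  have hcard : #(Icc 1 n) = Fintype.card (Fin n) := by simp
  have hsum := Fintype.sum_comp_eq_sum_of_image_eq hg hcard (fun a => (a : ℤ))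
  have hsq := Fintype.sum_comp_eq_sum_of_image_eq hg hcard (fun a => (a : ℤ) ^ 2)
  rw [sum_sum_sub_sq, card_univ, Fintype.card_fin, hsum, hsq]
  linear_combination (2 * n : ℤ) * six_mul_sum_Icc_one_sq n
    - 3 * (2 * ∑ a ∈ Icc 1 n, (a : ℤ) + n * (n + 1)) * two_mul_sum_Icc_one_id n

def sqDist {ι κ : Type*} [Fintype κ] (X : ι → κ → ℕ) (i i' : ι) : ℤ :=
  ∑ k, ((X i k : ℤ) - X i' k) ^ 2

theorem six_mul_sum_sum_sqDist {n m : ℕ} {X : Fin n → Fin m → ℕ}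
    (hX : ∀ k, univ.image (fun i => X i k) = Icc 1 n) :
    6 * ∑ i, ∑ i', sqDist X i i' = m * (n ^ 2 * (n ^ 2 - 1)) := by
  have hswap : ∑ i, ∑ i', sqDist X i i' = ∑ k, ∑ i, ∑ i', ((X i k : ℤ) - X i' k) ^ 2 :=
    (sum_congr rfl fun i _ => sum_comm).trans sum_comm
  rw [hswap, mul_sum, sum_congr rfl fun k _ => six_mul_sum_sum_sub_sq_of_image_eq_Icc (hX k)]
  simp

theorem exists_ne_mul_sqDist_le_sum_sum {ι κ : Type*} [Fintype ι] [DecidableEq ι]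
    [Nontrivial ι] [Fintype κ] (X : ι → κ → ℕ) :
    ∃ i i', i ≠ i' ∧ (Fintype.card ι * (Fintype.card ι - 1) : ℤ) * sqDist X i i' ≤
      ∑ i, ∑ i', sqDist X i i' := by
  obtain ⟨a, b, hab⟩ := exists_pair_ne ι
  have hne : (univ : Finset ι).offDiag.Nonempty := ⟨(a, b), by simpa using hab⟩
  obtain ⟨⟨i, i'⟩, hp, hle⟩ := exists_card_nsmul_le_sum hne (fun p => sqDist X p.1 p.2)
  refine ⟨i, i', (mem_offDiag.mp hp).2.2, ?_⟩
  have hsub : ∑ p ∈ univ.offDiag, sqDist X p.1 p.2 ≤ ∑ i, ∑ i', sqDist X i i' := by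
    rw [← Fintype.sum_prod_type']
    exact sum_le_sum_of_subset_of_nonneg (subset_univ _) fun p _ _ =>
      sum_nonneg fun k _ => sq_nonneg _
  rw [offDiag_card, card_univ, nsmul_eq_mul, Nat.cast_sub (Nat.le_mul_self _), Nat.cast_mul] at hle
  linarith

theorem stmt_1_general (n m : ℕ) (hn : 2 ≤ n)
    (X : Fin n → Fin m → ℕ)
    (hX : ∀ j : Fin m, Finset.image (fun i => X i j) Finset.univ = Finset.Icc 1 n) :
    ∃ i i' : Fin n, i ≠ i' ∧
      (∑ k : Fin m, ((X i k : ℤ) - (X i' k : ℤ)).natAbs ^ 2) ≤ n * (n + 1) * m / 6 := by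
  have : Nontrivial (Fin n) := Fin.nontrivial_iff_two_le.mpr hn
  obtain ⟨i, i', hii', hle⟩ := exists_ne_mul_sqDist_le_sum_sum X
  refine ⟨i, i', hii', ?_⟩
  have htot := six_mul_sum_sum_sqDist hX
  have hdist : ((∑ k : Fin m, ((X i k : ℤ) - X i' k).natAbs ^ 2 : ℕ) : ℤ) = sqDist X i i' := by
    simp [sqDist]
  have hpos : (0 : ℤ) < n * (n - 1) := by
    have : (2 : ℤ) ≤ n := by exact_mod_cast hn
    nlinarith
  rw [Fintype.card_fin] at hle
  rw [Nat.le_div_iff_mul_le (by norm_num), ← Nat.cast_le (α := ℤ)]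
  push_cast [hdist]
  refine le_of_mul_le_mul_left ?_ hpos
  linarith

/-- For an `n × m` Latin hypercube design (every column is a permutation
of `{1,…,n}`) with `n ≥ 2`, `m ≥ 1`, the minimum pairwise squared `L2`-distance is at
most `⌊n(n+1)m/6⌋`, i.e. some pair of distinct rows has squared `L2`-distance at most
`n*(n+1)*m/6`. -/
theorem stmt_1 (n m : ℕ) (hn : 2 ≤ n) (hm : 1 ≤ m)
    (X : Fin n → Fin m → ℕ)
    (hX : ∀ j : Fin m, Finset.image (fun i => X i j) Finset.univ = Finset.Icc 1 n) :
    ∃ i i' : Fin n, i ≠ i' ∧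
      (∑ k : Fin m, ((X i k : ℤ) - (X i' k : ℤ)).natAbs ^ 2) ≤ n * (n + 1) * m / 6 :=
  stmt_1_general n m hn X hX
end

section
/- Let p be an odd prime, m = p−1, and b ∈ {0,...,p−1}. Define the m×m matrix D̃_b with (i,j) entry f_b((i·j + b) mod p) for 1 ≤ i,j ≤ m, where f_b(x) = x+1 if x < b and f_b(x) = x if x > b. Then: (i) D̃_b is a Latin square, i.e., each row and each column of D̃_b is a permutation of {1,...,m}; (ii) D̃_b is pair-balanced with t_{i,j} = 1 for all 1 ≤ i ≠ j ≤ m; (iii) any two distinct rows of D̃_b have Hamming distance exactly m. -/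
/-!
Modulo `p`, entry `(i, j)` of `D̃_b` is `f_b` applied to the residue of `i * j + b`, which is
never `b`, and `f_b` maps the residues other than `b` bijectively onto `{1, …, m}`. Hence two
entries agree iff the products `i * j` agree in `𝔽_p`, which gives the Latin and Hamming
properties. The pair `(a, c)` sits at `(r, k), (r, k + 1)` iff `r * k + b = A` and
`r * (k + 1) + b = C` for the preimages `A`, `C` of `a`, `c`: a linear system with the unique
solution `r = C - A`, `k = (A - b) / (C - A)`, and `A ≠ b`, `C ≠ b` put `k` in `{1, …, m - 1}`.
-/

/-- The leave-one-out good lattice point design: entry `(i,j)` (for `1 ≤ i,j ≤ p-1`)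
is `f_b((i·j + b) mod p)` where `f_b(x) = x+1` if `x < b` and `f_b(x) = x` otherwise. -/
def Dtil (p b i j : ℕ) : ℕ :=
  let x := (i * j + b) % p
  if x < b then x + 1 else x

open Finset

theorem image_eq_of_mapsTo_of_injOn {α : Type*} [DecidableEq α] {s : Finset α} {f : α → α}
    (hmaps : Set.MapsTo f s s) (hinj : Set.InjOn f s) : s.image f = s :=
  eq_of_subset_of_card_le (image_subset_iff.2 hmaps) (card_image_of_injOn hinj).ge

theorem consecutive_values_eq_iff {F : Type*} [Field F] {A C β r k : F} (hAC : A ≠ C) :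
    (r * k + β = A ∧ r * (k + 1) + β = C) ↔ (r = C - A ∧ k = (A - β) / (C - A)) := by
  have hCA : C - A ≠ 0 := sub_ne_zero.2 hAC.symm
  constructor
  · rintro ⟨h₁, h₂⟩
    have hr : r = C - A := by linear_combination h₂ - h₁
    refine ⟨hr, ?_⟩
    rw [← hr, eq_div_iff (hr ▸ hCA)]
    linear_combination h₁
  · rintro ⟨rfl, rfl⟩
    constructor <;> field_simp <;> ring

namespace ZMod

variable {p n : ℕ}

theorem natCast_ne_zero_iff_mem_Icc (hn : n < p) : (n : ZMod p) ≠ 0 ↔ n ∈ Icc 1 (p - 1) := by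
  rw [Ne, natCast_eq_zero_iff, mem_Icc]
  constructor
  · intro h
    have : n ≠ 0 := by rintro rfl; exact h (dvd_zero p)
    omega
  · intro h hdvd
    exact absurd (Nat.le_of_dvd (by omega) hdvd) (by omega)

theorem natCast_ne_zero_of_mem_Icc (hn : n ∈ Icc 1 (p - 1)) : (n : ZMod p) ≠ 0 :=
  (natCast_ne_zero_iff_mem_Icc (by grind)).2 hn

theorem natCast_add_one_ne_zero_iff_mem_Icc (hn : n < p) :
    (n : ZMod p) ≠ 0 ∧ (n : ZMod p) + 1 ≠ 0 ↔ n ∈ Icc 1 (p - 2) := by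
  rw [natCast_ne_zero_iff_mem_Icc hn]
  rcases Nat.lt_or_ge (n + 1) p with h | h
  · rw [← Nat.cast_add_one, natCast_ne_zero_iff_mem_Icc h]
    simp only [mem_Icc]
    omega
  · have : n + 1 = p := by omega
    rw [← Nat.cast_add_one, this, natCast_self]
    simp only [ne_eq, not_true_eq_false, and_false, false_iff, mem_Icc]
    omega

theorem natCast_injOn : Set.InjOn (Nat.cast : ℕ → ZMod p) (Set.Iio p) := fun m hm n hn h => by
  rw [← val_natCast_of_lt hm, ← val_natCast_of_lt hn, h]

theorem natCast_eq_iff_eq_val [NeZero p] {z : ZMod p} (hn : n < p) :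
    (n : ZMod p) = z ↔ n = z.val :=
  ⟨fun h => h ▸ (val_natCast_of_lt hn).symm, fun h => h ▸ natCast_zmod_val z⟩

end ZMod

/-- `f_b` of the paper: it closes the gap left by the level `b`, which `x ↦ (i * j + b) % p`
never takes for `i, j ≠ 0`. -/
def relabel (b x : ℕ) : ℕ := if x < b then x + 1 else x

theorem relabel_injOn (b : ℕ) : Set.InjOn (relabel b) {x | x ≠ b} := by
  intro x hx y hy h
  simp only [Set.mem_ofPred_eq, relabel] at *
  split_ifs at h <;> omega

theorem relabel_mem_Icc {p b x : ℕ} (hb : b < p) (hx : x < p) (hxb : x ≠ b) :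
    relabel b x ∈ Icc 1 (p - 1) := by
  rw [mem_Icc, relabel]; split_ifs <;> omega

theorem exists_relabel_eq {p b a : ℕ} (ha : a ∈ Icc 1 (p - 1)) :
    ∃ x < p, x ≠ b ∧ relabel b x = a := by
  rw [mem_Icc] at ha
  by_cases hab : a ≤ b
  · exact ⟨a - 1, by omega, by omega, by rw [relabel]; split_ifs <;> omega⟩
  · exact ⟨a, by omega, by omega, by rw [relabel]; split_ifs <;> omega⟩

namespace Dtil

variable {p b i j : ℕ} [Fact p.Prime]

theorem eq_relabel_val : Dtil p b i j = relabel b (((i * j + b : ℕ) : ZMod p)).val := by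
  rw [ZMod.val_natCast]; rfl

theorem val_natCast_mul_add_ne (hi : i ∈ Icc 1 (p - 1)) (hj : j ∈ Icc 1 (p - 1)) :
    (((i * j + b : ℕ) : ZMod p)).val ≠ b := by
  intro h
  have hij : (i : ZMod p) * j = 0 := by
    have := ZMod.natCast_zmod_val ((i * j + b : ℕ) : ZMod p)
    rw [h] at this
    push_cast at this
    linear_combination -this
  rcases mul_eq_zero.1 hij with h0 | h0
  · exact ZMod.natCast_ne_zero_of_mem_Icc hi h0
  · exact ZMod.natCast_ne_zero_of_mem_Icc hj h0

theorem eq_relabel_iff {x : ℕ} (hi : i ∈ Icc 1 (p - 1)) (hj : j ∈ Icc 1 (p - 1))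
    (hx : x < p) (hxb : x ≠ b) :
    Dtil p b i j = relabel b x ↔ (i : ZMod p) * j + b = x := by
  rw [eq_relabel_val, (relabel_injOn b).eq_iff (val_natCast_mul_add_ne hi hj) hxb]
  push_cast
  exact ⟨fun h => h ▸ (ZMod.natCast_zmod_val _).symm, fun h => h ▸ ZMod.val_natCast_of_lt hx⟩

theorem mem_Icc (hb : b < p) (hi : i ∈ Icc 1 (p - 1)) (hj : j ∈ Icc 1 (p - 1)) :
    Dtil p b i j ∈ Icc 1 (p - 1) := by
  rw [eq_relabel_val (p := p)]
  exact relabel_mem_Icc hb (ZMod.val_lt _) (val_natCast_mul_add_ne hi hj)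

theorem eq_iff {i' j' : ℕ} (hi : i ∈ Icc 1 (p - 1)) (hj : j ∈ Icc 1 (p - 1))
    (hi' : i' ∈ Icc 1 (p - 1)) (hj' : j' ∈ Icc 1 (p - 1)) :
    Dtil p b i j = Dtil p b i' j' ↔ (i : ZMod p) * j = i' * j' := by
  rw [eq_relabel_val (i := i'),
    eq_relabel_iff hi hj (ZMod.val_lt _) (val_natCast_mul_add_ne hi' hj'), ZMod.natCast_zmod_val]
  push_cast
  exact add_left_inj _

theorem injOn_row (hi : i ∈ Icc 1 (p - 1)) : Set.InjOn (Dtil p b i) (Icc 1 (p - 1)) :=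
  fun j hj j' hj' h => ZMod.natCast_injOn (by grind) (by grind) <|
    mul_left_cancel₀ (ZMod.natCast_ne_zero_of_mem_Icc hi) ((eq_iff hi hj hi hj').1 h)

theorem injOn_column (hj : j ∈ Icc 1 (p - 1)) :
    Set.InjOn (fun i => Dtil p b i j) (Icc 1 (p - 1)) :=
  fun i hi i' hi' h => ZMod.natCast_injOn (by grind) (by grind) <|
    mul_right_cancel₀ (ZMod.natCast_ne_zero_of_mem_Icc hj) ((eq_iff hi hj hi' hj).1 h)

theorem card_filter_consecutive_eq_one {A C : ℕ} (hb : b < p) (hA : A < p) (hC : C < p)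
    (hAb : A ≠ b) (hCb : C ≠ b) (hAC : A ≠ C) :
    ((Icc 1 (p - 1) ×ˢ Icc 1 (p - 2)).filter
      (fun rk => Dtil p b rk.1 rk.2 = relabel b A ∧
        Dtil p b rk.1 (rk.2 + 1) = relabel b C)).card = 1 := by
  have hAC' : (A : ZMod p) ≠ C := fun h => hAC (ZMod.natCast_injOn hA hC h)
  have hAb' : (A : ZMod p) - b ≠ 0 := sub_ne_zero.2 fun h => hAb (ZMod.natCast_injOn hA hb h)
  have hCb' : (C : ZMod p) - b ≠ 0 := sub_ne_zero.2 fun h => hCb (ZMod.natCast_injOn hC hb h)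
  set R : ZMod p := C - A
  set K : ZMod p := (A - b) / (C - A)
  have hR : R ≠ 0 := sub_ne_zero.2 hAC'.symm
  have hK : K ≠ 0 ∧ K + 1 ≠ 0 := by
    refine ⟨div_ne_zero hAb' hR, ?_⟩
    rw [div_add_one hR, sub_add_sub_cancel']
    exact div_ne_zero hCb' hR
  have hsolution : ∀ rk ∈ Icc 1 (p - 1) ×ˢ Icc 1 (p - 2),
      (Dtil p b rk.1 rk.2 = relabel b A ∧ Dtil p b rk.1 (rk.2 + 1) = relabel b C) ↔
        rk = (R.val, K.val) := by
    rintro ⟨r, k⟩ hrk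
    obtain ⟨hr, hk⟩ := mem_product.1 hrk
    have hk' : k ∈ Icc 1 (p - 1) ∧ k + 1 ∈ Icc 1 (p - 1) := by
      simp only [Finset.mem_Icc] at hk ⊢; omega
    rw [eq_relabel_iff hr hk'.1 hA hAb, eq_relabel_iff hr hk'.2 hC hCb, Nat.cast_add_one,
      consecutive_values_eq_iff hAC', Prod.mk.injEq, ZMod.natCast_eq_iff_eq_val (by grind),
      ZMod.natCast_eq_iff_eq_val (by grind)]
  have hmem : (R.val, K.val) ∈ Icc 1 (p - 1) ×ˢ Icc 1 (p - 2) := by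
    rw [mem_product, ← ZMod.natCast_ne_zero_iff_mem_Icc (ZMod.val_lt _),
      ← ZMod.natCast_add_one_ne_zero_iff_mem_Icc (ZMod.val_lt _), ZMod.natCast_zmod_val,
      ZMod.natCast_zmod_val]
    exact ⟨hR, hK⟩
  rw [filter_congr hsolution, filter_eq', if_pos hmem, card_singleton]

end Dtil

theorem stmt_3_general (p : ℕ) (hp : p.Prime) (b : ℕ) (hb : b < p) :
    (∀ i ∈ Finset.Icc 1 (p - 1),
        Finset.image (fun j => Dtil p b i j) (Finset.Icc 1 (p - 1)) = Finset.Icc 1 (p - 1)) ∧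
    (∀ j ∈ Finset.Icc 1 (p - 1),
        Finset.image (fun i => Dtil p b i j) (Finset.Icc 1 (p - 1)) = Finset.Icc 1 (p - 1)) ∧
    (∀ a ∈ Finset.Icc 1 (p - 1), ∀ c ∈ Finset.Icc 1 (p - 1), a ≠ c →
        ((Finset.Icc 1 (p - 1) ×ˢ Finset.Icc 1 (p - 2)).filter
          (fun rk => Dtil p b rk.1 rk.2 = a ∧ Dtil p b rk.1 (rk.2 + 1) = c)).card = 1) ∧
    (∀ i ∈ Finset.Icc 1 (p - 1), ∀ i' ∈ Finset.Icc 1 (p - 1), i ≠ i' →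
        ((Finset.Icc 1 (p - 1)).filter
          (fun j => Dtil p b i j ≠ Dtil p b i' j)).card = p - 1) := by
  have := Fact.mk hp
  refine ⟨fun i hi => ?_, fun j hj => ?_, fun a ha c hc hac => ?_, fun i hi i' hi' hii' => ?_⟩
  · exact image_eq_of_mapsTo_of_injOn (fun j hj => Dtil.mem_Icc hb hi hj) (Dtil.injOn_row hi)
  · exact image_eq_of_mapsTo_of_injOn (fun i hi => Dtil.mem_Icc hb hi hj) (Dtil.injOn_column hj)
  · obtain ⟨A, hA, hAb, rfl⟩ := exists_relabel_eq (b := b) ha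
    obtain ⟨C, hC, hCb, rfl⟩ := exists_relabel_eq (b := b) hc
    exact Dtil.card_filter_consecutive_eq_one hb hA hC hAb hCb (ne_of_apply_ne _ hac)
  · have hdiff : ∀ j ∈ Icc 1 (p - 1), Dtil p b i j ≠ Dtil p b i' j :=
      fun j hj h => hii' (Dtil.injOn_column hj hi hi' h)
    rw [filter_true_of_mem hdiff, Nat.card_Icc, Nat.add_sub_cancel]

/-- for an odd prime `p`, `m = p - 1` and `b ∈ {0,…,p-1}`, the design
`D̃_b` is (i) a Latin square on `{1,…,m}` (each row and each column is a permutation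
of `{1,…,m}`), (ii) pair-balanced with every `t_{a,c} = 1` (`a ≠ c`), and (iii) any
two distinct rows have Hamming distance exactly `m`. -/
theorem stmt_3 (p : ℕ) (hp : p.Prime) (hodd : Odd p) (b : ℕ) (hb : b < p) :
    (∀ i ∈ Finset.Icc 1 (p - 1),
        Finset.image (fun j => Dtil p b i j) (Finset.Icc 1 (p - 1)) = Finset.Icc 1 (p - 1)) ∧
    (∀ j ∈ Finset.Icc 1 (p - 1),
        Finset.image (fun i => Dtil p b i j) (Finset.Icc 1 (p - 1)) = Finset.Icc 1 (p - 1)) ∧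
    (∀ a ∈ Finset.Icc 1 (p - 1), ∀ c ∈ Finset.Icc 1 (p - 1), a ≠ c →
        ((Finset.Icc 1 (p - 1) ×ˢ Finset.Icc 1 (p - 2)).filter
          (fun rk => Dtil p b rk.1 rk.2 = a ∧ Dtil p b rk.1 (rk.2 + 1) = c)).card = 1) ∧
    (∀ i ∈ Finset.Icc 1 (p - 1), ∀ i' ∈ Finset.Icc 1 (p - 1), i ≠ i' →
        ((Finset.Icc 1 (p - 1)).filter
          (fun j => Dtil p b i j ≠ Dtil p b i' j)).card = p - 1) :=
  stmt_3_general p hp b hb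
end

section
/- Let p be an odd prime, m = p−1, and b ∈ {0,...,p−1}. Define the m×m matrix Ẽ_b with (i,j) entry g_b(W((i·j + b) mod p)) for 1 ≤ i,j ≤ m, where W is the Williams transformation and g_b(x) = x+1 if x < W(b) and g_b(x) = x if x > W(b). Then: (i) Ẽ_b is a Latin square, i.e., each row and each column of Ẽ_b is a permutation of {1,...,m}; (ii) Ẽ_b is pair-balanced with t_{i,j} = 1 for all 1 ≤ i ≠ j ≤ m; (iii) any two distinct rows of Ẽ_b have Hamming distance exactly m. -/
/-- The Williams transformation on `{0,…,p-1}`: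
`W(x) = 2x` if `x < p/2`, and `W(x) = 2(p-x) - 1` otherwise. -/
def Wtr (p x : ℕ) : ℕ :=
  if 2 * x < p then 2 * x else 2 * (p - x) - 1

/-- The leave-one-out Williams-transformed design: entry `(i,j)` (for
`1 ≤ i,j ≤ p-1`) is `g_b(W((i·j + b) mod p))` where `g_b(x) = x+1` if `x < W(b)`
and `g_b(x) = x` otherwise. -/
def Etil (p b i j : ℕ) : ℕ :=
  let x := Wtr p ((i * j + b) % p)
  if x < Wtr p b then x + 1 else x

private lemma wtr_lt {p x : ℕ} (hx : x < p) : Wtr p x < p := by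
  unfold Wtr; split_ifs <;> omega

private lemma wtr_inj {p x y : ℕ} (hx : x < p) (hy : y < p)
    (h : Wtr p x = Wtr p y) : x = y := by
  unfold Wtr at h; split_ifs at h <;> omega

private lemma mod_add_ne {p b u : ℕ} (hb : b < p) (hu : ¬ p ∣ u) : (u + b) % p ≠ b := by
  intro h
  apply hu
  have h2 : (u + b) % p = (0 + b) % p := by
    simpa [Nat.mod_eq_of_lt hb] using h
  have h3 : u ≡ 0 [MOD p] := Nat.ModEq.add_right_cancel' b h2
  have h4 : u % p = 0 := by simpa [Nat.ModEq] using h3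
  exact Nat.dvd_of_mod_eq_zero h4

private lemma etil_eq_iff {p b i j i' j' : ℕ} (hp : 0 < p) (hb : b < p)
    (hu : ¬ p ∣ i * j) (hv : ¬ p ∣ i' * j') :
    Etil p b i j = Etil p b i' j' ↔ (i * j) % p = (i' * j') % p := by
  have hxp : Wtr p ((i * j + b) % p) < p := wtr_lt (Nat.mod_lt _ hp)
  have hyp : Wtr p ((i' * j' + b) % p) < p := wtr_lt (Nat.mod_lt _ hp)
  have htp : Wtr p b < p := wtr_lt hb
  have hxt : Wtr p ((i * j + b) % p) ≠ Wtr p b :=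
    fun h => mod_add_ne hb hu (wtr_inj (Nat.mod_lt _ hp) hb h)
  have hyt : Wtr p ((i' * j' + b) % p) ≠ Wtr p b :=
    fun h => mod_add_ne hb hv (wtr_inj (Nat.mod_lt _ hp) hb h)
  constructor
  · intro h
    simp only [Etil] at h
    have hxy : Wtr p ((i * j + b) % p) = Wtr p ((i' * j' + b) % p) := by
      split_ifs at h <;> omega
    have h2 := wtr_inj (Nat.mod_lt _ hp) (Nat.mod_lt _ hp) hxy
    exact Nat.ModEq.add_right_cancel' b h2
  · intro h
    have h2 : (i * j + b) % p = (i' * j' + b) % p := Nat.ModEq.add_right b h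
    simp only [Etil, h2]

private lemma etil_mem {p b i j : ℕ} (hp : 0 < p) (hb : b < p) (hu : ¬ p ∣ i * j) :
    Etil p b i j ∈ Finset.Icc 1 (p - 1) := by
  have hxp : Wtr p ((i * j + b) % p) < p := wtr_lt (Nat.mod_lt _ hp)
  have htp : Wtr p b < p := wtr_lt hb
  have hxt : Wtr p ((i * j + b) % p) ≠ Wtr p b :=
    fun h => mod_add_ne hb hu (wtr_inj (Nat.mod_lt _ hp) hb h)
  simp only [Etil, Finset.mem_Icc]
  split_ifs <;> omega

private lemma not_dvd_of_icc {p i : ℕ} (hp2 : 2 ≤ p) (h1 : 1 ≤ i) (h2 : i ≤ p - 1) :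
    ¬ p ∣ i := fun h => by have := Nat.le_of_dvd (by omega) h; omega

private lemma cast_ne_zero {p i : ℕ} (hp : p.Prime) (h1 : 1 ≤ i) (h2 : i ≤ p - 1) :
    (i : ZMod p) ≠ 0 := by
  haveI : NeZero p := ⟨hp.pos.ne'⟩
  intro h
  rw [ZMod.natCast_eq_zero_iff] at h
  exact not_dvd_of_icc hp.two_le h1 h2 h

private lemma cast_eq_nat {p i j : ℕ} (hi : i < p) (hj : j < p)
    (h : (i : ZMod p) = (j : ZMod p)) : i = j := by
  have h2 : i % p = j % p := (ZMod.natCast_eq_natCast_iff i j p).mp h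
  rwa [Nat.mod_eq_of_lt hi, Nat.mod_eq_of_lt hj] at h2

private lemma mod_to_cast {p u v : ℕ} (h : u % p = v % p) :
    ((u : ℕ) : ZMod p) = ((v : ℕ) : ZMod p) :=
  (ZMod.natCast_eq_natCast_iff u v p).mpr h

/-- for an odd prime `p`, `m = p - 1` and `b ∈ {0,…,p-1}`, the design
`Ẽ_b` is (i) a Latin square on `{1,…,m}` (each row and each column is a permutation
of `{1,…,m}`), (ii) pair-balanced with every `t_{a,c} = 1` (`a ≠ c`), and (iii) any
two distinct rows have Hamming distance exactly `m`. -/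
theorem stmt_4 (p : ℕ) (hp : p.Prime) (hodd : Odd p) (b : ℕ) (hb : b < p) :
    (∀ i ∈ Finset.Icc 1 (p - 1),
        Finset.image (fun j => Etil p b i j) (Finset.Icc 1 (p - 1)) = Finset.Icc 1 (p - 1)) ∧
    (∀ j ∈ Finset.Icc 1 (p - 1),
        Finset.image (fun i => Etil p b i j) (Finset.Icc 1 (p - 1)) = Finset.Icc 1 (p - 1)) ∧
    (∀ a ∈ Finset.Icc 1 (p - 1), ∀ c ∈ Finset.Icc 1 (p - 1), a ≠ c →
        ((Finset.Icc 1 (p - 1) ×ˢ Finset.Icc 1 (p - 2)).filter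
          (fun rk => Etil p b rk.1 rk.2 = a ∧ Etil p b rk.1 (rk.2 + 1) = c)).card = 1) ∧
    (∀ i ∈ Finset.Icc 1 (p - 1), ∀ i' ∈ Finset.Icc 1 (p - 1), i ≠ i' →
        ((Finset.Icc 1 (p - 1)).filter
          (fun j => Etil p b i j ≠ Etil p b i' j)).card = p - 1) := by
  haveI : Fact p.Prime := ⟨hp⟩
  have hp2 : 2 ≤ p := hp.two_le
  have hp3 : 3 ≤ p := by
    obtain ⟨k, hk⟩ := hodd
    omega
  have hp0 : 0 < p := by omega
  have hnd : ∀ {i j : ℕ}, i ∈ Finset.Icc 1 (p - 1) → j ∈ Finset.Icc 1 (p - 1) →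
      ¬ p ∣ i * j := by
    intro i j hi hj
    simp only [Finset.mem_Icc] at hi hj
    intro h
    rcases (Nat.Prime.dvd_mul hp).mp h with h' | h'
    · exact not_dvd_of_icc hp2 hi.1 hi.2 h'
    · exact not_dvd_of_icc hp2 hj.1 hj.2 h'
  have hcancel : ∀ {i j j' : ℕ}, i ∈ Finset.Icc 1 (p - 1) → j < p → j' < p →
      (i * j) % p = (i * j') % p → j = j' := by
    intro i j j' hi hjp hjp' h
    simp only [Finset.mem_Icc] at hi
    have hc := mod_to_cast (p := p) h
    push_cast at hc
    have := mul_left_cancel₀ (cast_ne_zero hp hi.1 hi.2) hc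
    exact cast_eq_nat hjp hjp' this
  have hcancelr : ∀ {i i' j : ℕ}, j ∈ Finset.Icc 1 (p - 1) → i < p → i' < p →
      (i * j) % p = (i' * j) % p → i = i' := by
    intro i i' j hj hip hip' h
    simp only [Finset.mem_Icc] at hj
    have hc := mod_to_cast (p := p) h
    push_cast at hc
    have := mul_right_cancel₀ (cast_ne_zero hp hj.1 hj.2) hc
    exact cast_eq_nat hip hip' this
  have hlt : ∀ {j : ℕ}, j ∈ Finset.Icc 1 (p - 1) → j < p := by
    intro j hj; simp only [Finset.mem_Icc] at hj; omega
  have hcard : (Finset.Icc 1 (p - 1)).card = p - 1 := by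
    rw [Nat.card_Icc]; omega
  refine ⟨?_, ?_, ?_, ?_⟩
  · -- rows
    intro i hi
    have hinj : Set.InjOn (fun j => Etil p b i j) (Finset.Icc 1 (p - 1)) := by
      intro j hj j' hj' h
      simp only [Finset.coe_Icc, Set.mem_Icc] at hj hj'
      have hjm : j ∈ Finset.Icc 1 (p - 1) := Finset.mem_Icc.mpr hj
      have hjm' : j' ∈ Finset.Icc 1 (p - 1) := Finset.mem_Icc.mpr hj'
      exact hcancel hi (hlt hjm) (hlt hjm')
        ((etil_eq_iff hp0 hb (hnd hi hjm) (hnd hi hjm')).mp h)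
    apply Finset.eq_of_subset_of_card_le
    · intro x hx
      obtain ⟨j, hj, rfl⟩ := Finset.mem_image.mp hx
      exact etil_mem hp0 hb (hnd hi hj)
    · rw [Finset.card_image_of_injOn hinj]
  · -- columns
    intro j hj
    have hinj : Set.InjOn (fun i => Etil p b i j) (Finset.Icc 1 (p - 1)) := by
      intro i hi i' hi' h
      simp only [Finset.coe_Icc, Set.mem_Icc] at hi hi'
      have him : i ∈ Finset.Icc 1 (p - 1) := Finset.mem_Icc.mpr hi
      have him' : i' ∈ Finset.Icc 1 (p - 1) := Finset.mem_Icc.mpr hi'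
      exact hcancelr hj (hlt him) (hlt him')
        ((etil_eq_iff hp0 hb (hnd him hj) (hnd him' hj)).mp h)
    apply Finset.eq_of_subset_of_card_le
    · intro x hx
      obtain ⟨i, hi, rfl⟩ := Finset.mem_image.mp hx
      exact etil_mem hp0 hb (hnd hi hj)
    · rw [Finset.card_image_of_injOn hinj]
  · -- pair balance
    intro a ha c hc hac
    set A := Finset.Icc 1 (p - 1) ×ˢ Finset.Icc 1 (p - 2) with hA
    set S := (Finset.Icc 1 (p - 1) ×ˢ Finset.Icc 1 (p - 1)).filter
        (fun ac : ℕ × ℕ => ¬ ac.1 = ac.2) with hS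
    set φ := fun rk : ℕ × ℕ => (Etil p b rk.1 rk.2, Etil p b rk.1 (rk.2 + 1)) with hφ
    have hmemA : ∀ {rk : ℕ × ℕ}, rk ∈ A →
        rk.1 ∈ Finset.Icc 1 (p - 1) ∧ rk.2 ∈ Finset.Icc 1 (p - 1) ∧
        rk.2 + 1 ∈ Finset.Icc 1 (p - 1) := by
      intro rk hrk
      rw [hA, Finset.mem_product] at hrk
      obtain ⟨h1, h2⟩ := hrk
      simp only [Finset.mem_Icc] at h1 h2 ⊢
      omega
    have hinj : Set.InjOn φ A := by
      intro rk hrkm rk' hrkm' h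
      have hrk : rk ∈ A := hrkm
      have hrk' : rk' ∈ A := hrkm'
      obtain ⟨hr, hk, hk1⟩ := hmemA hrk
      obtain ⟨hr', hk', hk1'⟩ := hmemA hrk'
      simp only [hφ, Prod.mk.injEq] at h
      have hm1 : (rk.1 * rk.2) % p = (rk'.1 * rk'.2) % p :=
        (etil_eq_iff hp0 hb (hnd hr hk) (hnd hr' hk')).mp h.1
      have hm2 : (rk.1 * (rk.2 + 1)) % p = (rk'.1 * (rk'.2 + 1)) % p :=
        (etil_eq_iff hp0 hb (hnd hr hk1) (hnd hr' hk1')).mp h.2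
      have hc1 := mod_to_cast (p := p) hm1
      have hc2 := mod_to_cast (p := p) hm2
      push_cast at hc1 hc2
      rw [mul_add_one, mul_add_one, hc1] at hc2
      have hrr : ((rk.1 : ℕ) : ZMod p) = ((rk'.1 : ℕ) : ZMod p) := by
        exact add_left_cancel hc2
      have hre : rk.1 = rk'.1 := cast_eq_nat (hlt hr) (hlt hr') hrr
      have hke : rk.2 = rk'.2 := by
        rw [hre] at hm1
        exact hcancel hr' (hlt hk) (hlt hk') hm1
      exact Prod.ext hre hke
    have hsub : ∀ rk ∈ A, φ rk ∈ S := by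
      intro rk hrk
      obtain ⟨hr, hk, hk1⟩ := hmemA hrk
      rw [hS, Finset.mem_filter, Finset.mem_product]
      refine ⟨⟨etil_mem hp0 hb (hnd hr hk), etil_mem hp0 hb (hnd hr hk1)⟩, ?_⟩
      intro h
      have := hcancel hr (hlt hk) (hlt hk1)
        ((etil_eq_iff hp0 hb (hnd hr hk) (hnd hr hk1)).mp h)
      omega
    have hAcard : A.card = (p - 1) * (p - 2) := by
      rw [hA, Finset.card_product, Nat.card_Icc, Nat.card_Icc]
      congr 1
    have hdiag : ((Finset.Icc 1 (p - 1) ×ˢ Finset.Icc 1 (p - 1)).filter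
        (fun ac : ℕ × ℕ => ac.1 = ac.2)) = (Finset.Icc 1 (p - 1)).image (fun a => (a, a)) := by
      ext ⟨u, v⟩
      simp only [Finset.mem_filter, Finset.mem_product, Finset.mem_image, Finset.mem_Icc,
        Prod.mk.injEq]
      constructor
      · rintro ⟨⟨h1, h2⟩, rfl⟩
        exact ⟨u, h1, rfl, rfl⟩
      · rintro ⟨x, hx, rfl, rfl⟩
        exact ⟨⟨hx, hx⟩, rfl⟩
    have hdiagcard : ((Finset.Icc 1 (p - 1) ×ˢ Finset.Icc 1 (p - 1)).filter
        (fun ac : ℕ × ℕ => ac.1 = ac.2)).card = p - 1 := by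
      rw [hdiag, Finset.card_image_of_injective _ (fun x y h => (Prod.mk.injEq _ _ _ _ ▸ h).1),
        hcard]
    have hScard : S.card = (p - 1) * (p - 2) := by
      have htot := Finset.card_filter_add_card_filter_not
        (s := Finset.Icc 1 (p - 1) ×ˢ Finset.Icc 1 (p - 1))
        (p := fun ac : ℕ × ℕ => ac.1 = ac.2)
      rw [hdiagcard, Finset.card_product, hcard] at htot
      have hmul : (p - 1) * (p - 1) = (p - 1) * (p - 2) + (p - 1) := by
        have h2 : p - 1 = (p - 2) + 1 := by omega
        rw [h2, Nat.mul_succ]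
      rw [hS]
      omega
    have himg : A.image φ = S := by
      apply Finset.eq_of_subset_of_card_le
      · intro x hx
        obtain ⟨rk, hrk, rfl⟩ := Finset.mem_image.mp hx
        exact hsub rk hrk
      · rw [Finset.card_image_of_injOn hinj, hAcard, hScard]
    have hacS : (a, c) ∈ S := by
      rw [hS, Finset.mem_filter, Finset.mem_product]
      exact ⟨⟨ha, hc⟩, hac⟩
    rw [← himg] at hacS
    obtain ⟨rk0, hrk0, hphi0⟩ := Finset.mem_image.mp hacS
    rw [Finset.card_eq_one]
    refine ⟨rk0, ?_⟩
    ext rk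
    simp only [Finset.mem_filter, Finset.mem_singleton]
    constructor
    · rintro ⟨hrkA, he1, he2⟩
      apply hinj hrkA hrk0
      rw [hphi0, hφ]
      exact Prod.ext he1 he2
    · rintro rfl
      have h1 := congrArg Prod.fst hphi0
      have h2 := congrArg Prod.snd hphi0
      simp only [hφ] at h1 h2
      exact ⟨hrk0, h1, h2⟩
  · -- Hamming distance
    intro i hi i' hi' hne
    have heq : (Finset.Icc 1 (p - 1)).filter (fun j => Etil p b i j ≠ Etil p b i' j)
        = Finset.Icc 1 (p - 1) := by
      apply Finset.filter_true_of_mem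
      intro j hj h
      exact hne (hcancelr hj (hlt hi) (hlt hi')
        ((etil_eq_iff hp0 hb (hnd hi hj) (hnd hi' hj)).mp h))
    rw [heq, hcard]
end

section
/- Let p be an odd prime and let W be the Williams transformation on {0,...,p−1}. Then for every x ∈ {0,...,p−1}, W(x) + W(((p−1)/2 − x) mod p) = p − 1; equivalently, W(x) + W(x') = p − 1 where x' = ((p−1)·x + (p−1)/2) mod p. -/
/-- for an odd prime `p` and every `x ∈ {0,…,p-1}`,
`W(x) + W(((p-1)/2 - x) mod p) = p - 1`; equivalently,
`W(x) + W(x') = p - 1` where `x' = ((p-1)·x + (p-1)/2) mod p`. -/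
theorem stmt_8 (p : ℕ) (hp : p.Prime) (hodd : Odd p) :
    ∀ x < p,
      Wtr p x + Wtr p (((p - 1) / 2 + (p - x)) % p) = p - 1 ∧
      Wtr p x + Wtr p (((p - 1) * x + (p - 1) / 2) % p) = p - 1 := by
  intro x hx
  obtain ⟨m, hm⟩ := hodd
  have h2 := hp.two_le
  have h3 : 3 ≤ p := by omega
  have hm2 : (p - 1) / 2 = m := by omega
  have e2 : ((p - 1) * x + (p - 1) / 2) % p = (m + (p - x)) % p := by
    have h : (p - 1) * x + (p - 1) / 2 + x + p = ((p - 1) / 2 + (p - x) + x) + x * p := by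
      rw [hm2, show p - 1 = 2 * m from by omega,
        show m + (p - x) + x = m + p from by omega, hm]
      ring
    have := Nat.ModEq.add_right_cancel' (c := x) (n := p)
      (a := (p - 1) * x + (p - 1) / 2) (b := (p - 1) / 2 + (p - x))
      (by unfold Nat.ModEq
          rw [← Nat.add_mod_right ((p - 1) * x + (p - 1) / 2 + x) p, h,
            Nat.add_mul_mod_self_right])
    rw [this, hm2]
  have e1 : ((p - 1) / 2 + (p - x)) % p = (m + (p - x)) % p := by rw [hm2]
  rw [e1, e2]
  rcases le_or_gt x m with hcase | hcase
  · have hy : (m + (p - x)) % p = m - x := by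
      rw [show m + (p - x) = p + (m - x) from by omega, Nat.add_mod_left,
        Nat.mod_eq_of_lt (by omega)]
    rw [hy]
    constructor <;> · simp only [Wtr]; split_ifs <;> omega
  · have hy : (m + (p - x)) % p = m + (p - x) := Nat.mod_eq_of_lt (by omega)
    rw [hy]
    constructor <;> · simp only [Wtr]; split_ifs <;> omega
end

section
/- Let p be an odd prime, m = p−1, and let b, b' ∈ {0,...,p−1} with b ≠ b' and b + b' = (p−1)/2. For each i ∈ {1,...,m} and each j ∈ {1,...,m}, Ẽ_b(i,j) + Ẽ_{b'}(p−i, j) = p; that is, the entrywise sum of the i-th row of Ẽ_b and the (p−i)-th row of Ẽ_{b'} is the constant row with all entries equal to p. -/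
lemma Wtr_add_Wtr_of_add_mod {p u v : ℕ} (hp : Odd p) (hu : u < p) (hv : v < p)
    (h : (u + v) % p = (p - 1) / 2) : Wtr p u + Wtr p v = p - 1 := by
  obtain ⟨q, rfl⟩ := hp
  have huv : u + v = q ∨ u + v = q + (2 * q + 1) := by
    rcases Nat.lt_or_ge (u + v) (2 * q + 1) with hlt | hge
    · rw [Nat.mod_eq_of_lt hlt] at h
      omega
    · rw [Nat.mod_eq_sub_mod hge, Nat.mod_eq_of_lt (by omega)] at h
      omega
  unfold Wtr
  split <;> split <;> omega

lemma Wtr_injOn (p : ℕ) : Set.InjOn (Wtr p) (Set.Iio p) := by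
  intro u (hu : u < p) v (hv : v < p) h
  unfold Wtr at h
  split at h <;> split at h <;> omega

lemma mul_add_mod_ne_self {p i j b : ℕ} (hp : p.Prime) (hi : 0 < i) (hip : i < p)
    (hj : 0 < j) (hjp : j < p) (hb : b < p) : (i * j + b) % p ≠ b := by
  intro h
  have hmod : i * j + b ≡ 0 + b [MOD p] := by
    rw [zero_add, Nat.ModEq, h, Nat.mod_eq_of_lt hb]
  rcases hp.dvd_mul.mp (Nat.modEq_zero_iff_dvd.mp (hmod.add_right_cancel' b)) with hdvd | hdvd
  · exact absurd (Nat.le_of_dvd hi hdvd) (by omega)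
  · exact absurd (Nat.le_of_dvd hj hdvd) (by omega)

lemma mul_add_mod_add_sub_mul_add_mod {p i : ℕ} (j b b' : ℕ) (hi : i ≤ p) :
    ((i * j + b) % p + ((p - i) * j + b') % p) % p = (b + b') % p := by
  have hsplit : i * j + b + ((p - i) * j + b') = p * j + (b + b') := by
    have : i * j + (p - i) * j = p * j := by rw [← Nat.add_mul, Nat.add_sub_cancel' hi]
    omega
  rw [← Nat.add_mod, hsplit, Nat.mul_add_mod]

lemma Etil_add_Etil {p b b' i j i' j' : ℕ} (hp : Odd p)
    (hsum : b + b' = (p - 1) / 2)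
    (hres : ((i * j + b) % p + (i' * j' + b') % p) % p = (p - 1) / 2)
    (hne : (i * j + b) % p ≠ b) :
    Etil p b i j + Etil p b' i' j' = p := by
  have hp0 : 0 < p := hp.pos
  have hb : b < p := by omega
  have hb' : b' < p := by omega
  have hWuv := Wtr_add_Wtr_of_add_mod hp (Nat.mod_lt (i * j + b) hp0)
    (Nat.mod_lt (i' * j' + b') hp0) hres
  have hWbb := Wtr_add_Wtr_of_add_mod hp hb hb' (by rw [hsum, Nat.mod_eq_of_lt (by omega)])
  have hWub : Wtr p ((i * j + b) % p) ≠ Wtr p b :=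
    fun h => hne (Wtr_injOn p (Nat.mod_lt _ hp0) hb h)
  simp only [Etil]
  split <;> split <;> omega

theorem stmt_9_general (p : ℕ) (hp : p.Prime) (hodd : Odd p)
    (b b' : ℕ)
    (hsum : b + b' = (p - 1) / 2) :
    ∀ i ∈ Finset.Icc 1 (p - 1), ∀ j ∈ Finset.Icc 1 (p - 1),
      Etil p b i j + Etil p b' (p - i) j = p := by
  intro i hi j hj
  rw [Finset.mem_Icc] at hi hj
  have hb : b < p := by omega
  refine Etil_add_Etil hodd hsum ?_ (mul_add_mod_ne_self hp (by omega) (by omega)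
    (by omega) (by omega) hb)
  rw [mul_add_mod_add_sub_mul_add_mod j b b' (by omega), hsum, Nat.mod_eq_of_lt (by omega)]

/-- for an odd prime `p`, `m = p - 1`, and distinct `b, b' ∈ {0,…,p-1}`
with `b + b' = (p-1)/2`, for each `i, j ∈ {1,…,m}` we have
`Ẽ_b(i,j) + Ẽ_{b'}(p-i,j) = p`. -/
theorem stmt_9 (p : ℕ) (hp : p.Prime) (hodd : Odd p)
    (b b' : ℕ) (hb : b < p) (hb' : b' < p) (hne : b ≠ b')
    (hsum : b + b' = (p - 1) / 2) :
    ∀ i ∈ Finset.Icc 1 (p - 1), ∀ j ∈ Finset.Icc 1 (p - 1),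
      Etil p b i j + Etil p b' (p - i) j = p :=
  stmt_9_general p hp hodd b b' hsum
end

section
/- Let m be an even positive integer and let W_m^{−1}: {0,...,m−1} → {0,...,m−1} be given by W_m^{−1}(y) = y/2 if y is even and W_m^{−1}(y) = m − (y+1)/2 if y is odd. Define the m×m matrix M by M(i,j) = v if v ≠ 0 and M(i,j) = m if v = 0, where v = (W_m^{−1}(j−1) + i − 1) mod m, for 1 ≤ i,j ≤ m. Then M is a Latin square with entries in {1,...,m} that is pair-balanced with t_{i,j} = 1 for all 1 ≤ i ≠ j ≤ m. -/
/-!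
The first row `h = (W⁻¹(0), …, W⁻¹(m-1))` is a permutation of `ℤ/m`, and row `r` is
`h + (r - 1)`, so rows and columns are permutations. The consecutive differences of `h` are
`W⁻¹(k) - W⁻¹(k-1) = (-1)^k k`, which for even `m` are pairwise distinct mod `m`. Hence the
ordered pair of entries at positions `(k, k+1)` of row `r` determines `k` (through its difference)
and then `r` (through its first entry): `(r, k) ↦ (M(r,k), M(r,k+1))` is an injection from the
`m(m-1)` positions into the `m(m-1)` ordered pairs of distinct symbols, hence a bijection.
-/

/-- The inverse Williams transformation on `{0,…,m-1}`:
`W⁻¹(y) = y/2` if `y` is even, `W⁻¹(y) = m - (y+1)/2` if `y` is odd. -/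
def WinvM (m y : ℕ) : ℕ :=
  if y % 2 = 0 then y / 2 else m - (y + 1) / 2

/-- The Williams Latin square: entry `(i,j)` (for `1 ≤ i,j ≤ m`) is
`(W⁻¹(j-1) + i - 1) mod m`, with `0` replaced by `m`. -/
def WLS (m i j : ℕ) : ℕ :=
  let v := (WinvM m (j - 1) + (i - 1)) % m
  if v = 0 then m else v

open Finset

namespace Finset

variable {α β : Type*} {s : Finset α}

lemma image_eq_self_of_mapsTo_of_injOn [DecidableEq α] {f : α → α} (hf : Set.MapsTo f s s)
    (hinj : Set.InjOn f s) : s.image f = s :=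
  eq_of_subset_of_card_le hf.finsetImage_subset (card_image_of_injOn hinj).ge

lemma card_filter_eq_one_of_injOn [DecidableEq β] {t : Finset β} {f : α → β}
    (hf : Set.MapsTo f s t) (hinj : Set.InjOn f s) (hst : #t ≤ #s) {b : β} (hb : b ∈ t) :
    #(s.filter (f · = b)) = 1 := by
  obtain ⟨a, ha, rfl⟩ := surjOn_of_injOn_of_card_le f hf hinj hst hb
  exact card_eq_one.2 ⟨a, eq_singleton_iff_unique_mem.2
    ⟨mem_filter.2 ⟨ha, rfl⟩, fun x hx => hinj (mem_filter.1 hx).1 ha (mem_filter.1 hx).2⟩⟩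

end Finset

lemma ZMod.natCast_injOn_Iio (m : ℕ) : Set.InjOn (Nat.cast : ℕ → ZMod m) (Set.Iio m) := by
  intro a ha b hb h
  rwa [ZMod.natCast_eq_natCast_iff', Nat.mod_eq_of_lt ha, Nat.mod_eq_of_lt hb] at h

lemma ZMod.neg_one_pow_mul_injOn {m : ℕ} (hm : Even m) :
    Set.InjOn (fun k : ℕ => ((-1) ^ k * k : ZMod m)) (Set.Icc 1 (m - 1)) := by
  intro k hk l hl h
  simp only [Set.mem_Icc] at hk hl h
  have hinj : ∀ {k l : ℕ}, k ≤ m - 1 → l ≤ m - 1 → (k : ZMod m) = l → k = l :=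
    fun hk hl h => natCast_injOn_Iio m (Set.mem_Iio.2 (by omega)) (Set.mem_Iio.2 (by omega)) h
  -- `m ∣ k + l` forces `k + l = m`, which is even
  have ne_neg_of_even_of_odd : ∀ {k l : ℕ}, 1 ≤ k → k ≤ m - 1 → 1 ≤ l → l ≤ m - 1 →
      Even k → Odd l → (k : ZMod m) ≠ -l := by
    intro k l hk1 hk hl1 hl hke hlo h
    have hdvd : m ∣ k + l :=
      (ZMod.natCast_eq_zero_iff _ _).1 (by push_cast; rw [h, neg_add_cancel])
    have := Nat.eq_of_dvd_of_lt_two_mul (by omega) hdvd (by omega)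
    obtain ⟨a, rfl⟩ := hke; obtain ⟨b, rfl⟩ := hlo; obtain ⟨c, rfl⟩ := hm
    omega
  rcases Nat.even_or_odd k with hk' | hk' <;> rcases Nat.even_or_odd l with hl' | hl' <;>
    simp only [hk'.neg_one_pow, hl'.neg_one_pow, one_mul, neg_one_mul, neg_inj] at h
  · exact hinj hk.2 hl.2 h
  · exact absurd h (ne_neg_of_even_of_odd hk.1 hk.2 hl.1 hl.2 hk' hl')
  · exact absurd h.symm (ne_neg_of_even_of_odd hl.1 hl.2 hk.1 hk.2 hl' hk')
  · exact hinj hk.2 hl.2 h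

lemma WinvM_lt {m y : ℕ} (hy : y < m) : WinvM m y < m := by
  unfold WinvM; split_ifs <;> omega

lemma WinvM_injOn (m : ℕ) : Set.InjOn (WinvM m) (Set.Iio m) := by
  intro x hx y hy h
  simp only [Set.mem_Iio] at hx hy
  unfold WinvM at h; split_ifs at h <;> omega

lemma WinvM_sub_WinvM_pred {m k : ℕ} (hk : 1 ≤ k) (hkm : k < m) :
    (WinvM m k : ZMod m) - WinvM m (k - 1) = (-1) ^ k * k := by
  obtain ⟨t, rfl | rfl⟩ := Nat.even_or_odd' k
  · have h1 : WinvM m (2 * t) = t := by simp [WinvM]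
    have h2 : WinvM m (2 * t - 1) = m - t := by
      unfold WinvM; rw [if_neg (by omega)]; congr 1; omega
    rw [h1, h2, Nat.cast_sub (by omega), ZMod.natCast_self, pow_mul]
    push_cast; ring
  · have h1 : WinvM m (2 * t + 1) = m - (t + 1) := by
      unfold WinvM; rw [if_neg (by omega)]; congr 1; omega
    have h2 : WinvM m (2 * t + 1 - 1) = t := by simp [WinvM]
    rw [h1, h2, Nat.cast_sub (by omega), ZMod.natCast_self, pow_succ, pow_mul]
    push_cast; ring

lemma WLS_mem {m : ℕ} (hm : 0 < m) (i j : ℕ) : WLS m i j ∈ Icc 1 m := by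
  have := Nat.mod_lt (WinvM m (j - 1) + (i - 1)) hm
  simp only [WLS, mem_Icc]; split_ifs <;> omega

lemma natCast_eq_of_WLS_eq {m i j i' j' : ℕ} (hm : 0 < m) (h : WLS m i j = WLS m i' j') :
    (WinvM m (j - 1) : ZMod m) + (i - 1 : ℕ) = (WinvM m (j' - 1) : ZMod m) + (i' - 1 : ℕ) := by
  have := Nat.mod_lt (WinvM m (j - 1) + (i - 1)) hm
  have := Nat.mod_lt (WinvM m (j' - 1) + (i' - 1)) hm
  have key : (WinvM m (j - 1) + (i - 1)) % m = (WinvM m (j' - 1) + (i' - 1)) % m := by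
    simp only [WLS] at h; split_ifs at h <;> omega
  exact_mod_cast (ZMod.natCast_eq_natCast_iff' _ _ m).2 key

lemma WLS_injOn_row {m : ℕ} (hm : 0 < m) (i : ℕ) : Set.InjOn (WLS m i) (Set.Icc 1 m) := by
  intro j hj j' hj' h
  simp only [Set.mem_Icc] at hj hj'
  have hW := ZMod.natCast_injOn_Iio m (WinvM_lt (by omega : j - 1 < m))
    (WinvM_lt (by omega : j' - 1 < m)) (add_right_cancel (natCast_eq_of_WLS_eq hm h))
  have := WinvM_injOn m (Set.mem_Iio.2 (by omega)) (Set.mem_Iio.2 (by omega)) hW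
  omega

lemma WLS_injOn_col {m : ℕ} (hm : 0 < m) (j : ℕ) :
    Set.InjOn (fun i => WLS m i j) (Set.Icc 1 m) := by
  intro i hi i' hi' h
  simp only [Set.mem_Icc] at hi hi'
  have := ZMod.natCast_injOn_Iio m (Set.mem_Iio.2 (by omega)) (Set.mem_Iio.2 (by omega))
    (add_left_cancel (natCast_eq_of_WLS_eq hm h))
  omega

lemma WLS_pair_mapsTo {m : ℕ} (hm : 0 < m) :
    Set.MapsTo (fun rk : ℕ × ℕ => (WLS m rk.1 rk.2, WLS m rk.1 (rk.2 + 1)))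
      ↑(Icc 1 m ×ˢ Icc 1 (m - 1)) ↑(Icc 1 m).offDiag := by
  rintro ⟨r, k⟩ hrk
  simp only [coe_product, coe_Icc, Set.mem_prod, Set.mem_Icc] at hrk
  refine mem_offDiag.2 ⟨WLS_mem hm r k, WLS_mem hm r (k + 1), fun h => ?_⟩
  have := WLS_injOn_row hm r (Set.mem_Icc.2 ⟨hrk.2.1, by omega⟩)
    (Set.mem_Icc.2 ⟨by omega, by omega⟩) h
  omega

lemma WLS_pair_injOn {m : ℕ} (hm : 0 < m) (heven : Even m) :
    Set.InjOn (fun rk : ℕ × ℕ => (WLS m rk.1 rk.2, WLS m rk.1 (rk.2 + 1)))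
      ↑(Icc 1 m ×ˢ Icc 1 (m - 1)) := by
  rintro ⟨r, k⟩ hrk ⟨r', k'⟩ hrk' h
  simp only [coe_product, coe_Icc, Set.mem_prod, Set.mem_Icc, Prod.mk.injEq] at hrk hrk' h
  have e₁ := natCast_eq_of_WLS_eq hm h.1
  have e₂ := natCast_eq_of_WLS_eq hm h.2
  simp only [Nat.add_sub_cancel] at e₂
  obtain rfl : k = k' := by
    refine ZMod.neg_one_pow_mul_injOn heven hrk.2 hrk'.2 ?_
    simp only
    rw [← WinvM_sub_WinvM_pred hrk.2.1 (by omega), ← WinvM_sub_WinvM_pred hrk'.2.1 (by omega)]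
    linear_combination e₂ - e₁
  have := ZMod.natCast_injOn_Iio m (Set.mem_Iio.2 (by omega)) (Set.mem_Iio.2 (by omega))
    (add_left_cancel e₁)
  simp only [Prod.mk.injEq, and_true]
  omega

/-- for an even positive integer `m`, the Williams Latin square `M`
is a Latin square with entries in `{1,…,m}` (every row and every column is a
permutation of `{1,…,m}`) which is pair-balanced with all `t_{a,c} = 1` for
`1 ≤ a ≠ c ≤ m`. -/
theorem stmt_10 (m : ℕ) (hm : 0 < m) (heven : Even m) :
    (∀ i ∈ Finset.Icc 1 m,
        Finset.image (fun j => WLS m i j) (Finset.Icc 1 m) = Finset.Icc 1 m) ∧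
    (∀ j ∈ Finset.Icc 1 m,
        Finset.image (fun i => WLS m i j) (Finset.Icc 1 m) = Finset.Icc 1 m) ∧
    (∀ a ∈ Finset.Icc 1 m, ∀ c ∈ Finset.Icc 1 m, a ≠ c →
        ((Finset.Icc 1 m ×ˢ Finset.Icc 1 (m - 1)).filter
          (fun rk => WLS m rk.1 rk.2 = a ∧ WLS m rk.1 (rk.2 + 1) = c)).card = 1) := by
  refine ⟨fun i _ => ?_, fun j _ => ?_, fun a ha c hc hac => ?_⟩
  · exact image_eq_self_of_mapsTo_of_injOn (fun j _ => WLS_mem hm i j)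
      (by simpa using WLS_injOn_row hm i)
  · exact image_eq_self_of_mapsTo_of_injOn (fun i _ => WLS_mem hm i j)
      (by simpa using WLS_injOn_col hm j)
  · have hcard : #(Icc 1 m).offDiag ≤ #(Icc 1 m ×ˢ Icc 1 (m - 1)) := by
      simp [offDiag_card, Nat.mul_sub_one]
    simpa [Prod.ext_iff] using card_filter_eq_one_of_injOn (WLS_pair_mapsTo hm)
      (WLS_pair_injOn hm heven) hcard (b := (a, c)) (mem_offDiag.2 ⟨ha, hc, hac⟩)
end

section
/- Let m be an even positive integer and let W_m^{−1}: {0,...,m−1} → {0,...,m−1} be given by W_m^{−1}(y) = y/2 if y is even and W_m^{−1}(y) = m − (y+1)/2 if y is odd. Then the m−1 first-order differences (W_m^{−1}(y+1) − W_m^{−1}(y)) mod m, for y = 0,1,...,m−2, are pairwise distinct and form exactly the set {1,2,...,m−1}. -/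
section

variable {m y : ℕ}

theorem WinvM_succ_add_sub_mod (hm : Even m) (hy : y < m - 1) :
    (WinvM m (y + 1) + m - WinvM m y) % m = if y % 2 = 0 then m - 1 - y else y + 1 := by
  obtain ⟨k, rfl⟩ := hm
  unfold WinvM
  by_cases hy2 : y % 2 = 0
  · have hsum : k + k - (y + 1 + 1) / 2 + (k + k) - y / 2 = (k + k) + (k + k - 1 - y) := by
      omega
    rw [if_neg (by omega), if_pos hy2, if_pos hy2, hsum, Nat.add_mod_left,
      Nat.mod_eq_of_lt (by omega)]
  · have hsum : (y + 1) / 2 + (k + k) - (k + k - (y + 1) / 2) = y + 1 := by omega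
    rw [if_pos (by omega), if_neg hy2, if_neg hy2, hsum, Nat.mod_eq_of_lt (by omega)]

theorem WinvM_succ_add_sub_mod_mem_Icc (hm : Even m) (hy : y < m - 1) :
    (WinvM m (y + 1) + m - WinvM m y) % m ∈ Finset.Icc 1 (m - 1) := by
  rw [WinvM_succ_add_sub_mod hm hy, Finset.mem_Icc]
  split_ifs <;> omega

theorem injOn_WinvM_succ_add_sub_mod (hm : Even m) :
    Set.InjOn (fun y => (WinvM m (y + 1) + m - WinvM m y) % m) (Finset.range (m - 1)) := by
  intro a ha b hb hab
  rw [Finset.coe_range, Set.mem_Iio] at ha hb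
  obtain ⟨k, rfl⟩ := hm
  dsimp only at hab
  rw [WinvM_succ_add_sub_mod ⟨k, rfl⟩ ha, WinvM_succ_add_sub_mod ⟨k, rfl⟩ hb] at hab
  split_ifs at hab <;> omega

end

theorem stmt_11_general (m : ℕ) (heven : Even m) :
    Set.InjOn (fun y => (WinvM m (y + 1) + m - WinvM m y) % m) (Finset.range (m - 1)) ∧
    Finset.image (fun y => (WinvM m (y + 1) + m - WinvM m y) % m) (Finset.range (m - 1)) =
      Finset.Icc 1 (m - 1) := by
  have hinj := injOn_WinvM_succ_add_sub_mod heven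
  refine ⟨hinj, Finset.eq_of_subset_of_card_le ?_ ?_⟩
  · intro x hx
    obtain ⟨y, hy, rfl⟩ := Finset.mem_image.1 hx
    exact WinvM_succ_add_sub_mod_mem_Icc heven (Finset.mem_range.1 hy)
  · rw [Finset.card_image_of_injOn hinj, Finset.card_range, Nat.card_Icc]
    omega

/-- for an even positive integer `m`, the `m - 1` first-order
differences `(W⁻¹(y+1) - W⁻¹(y)) mod m`, `y = 0,…,m-2`, are pairwise distinct and
form exactly the set `{1,…,m-1}`. -/
theorem stmt_11 (m : ℕ) (hm : 0 < m) (heven : Even m) :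
    Set.InjOn (fun y => (WinvM m (y + 1) + m - WinvM m y) % m) (Finset.range (m - 1)) ∧
    Finset.image (fun y => (WinvM m (y + 1) + m - WinvM m y) % m) (Finset.range (m - 1)) =
      Finset.Icc 1 (m - 1) :=
  stmt_11_general m heven
end

section
/- Let q = 2m+1 be an odd prime with m ≥ 1, and define the m×m matrix E by E(i,j) = min(i·j mod q, q − (i·j mod q)) for 1 ≤ i,j ≤ m. Then each column of E is a permutation of {1,...,m} (so E is an m×m Latin hypercube design), and every pair of distinct rows of E has L1-distance exactly m(m+1)/3; that is, E is an L1-equidistant design with d_1(E) = m(m+1)/3 = ⌊(m+1)m/3⌋. -/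
/-!
Write `φ x = |x.valMinAbs|` for the distance from `x` to `0` on the cycle `ZMod q`, so that
`E i j = φ (i j)`, and extend the rows to all of `ZMod q`: `D a b = ∑_y |φ (a y) - φ (b y)|`.
On the cycle `|φ s - φ t| = min (φ (s - t)) (φ (s + t))`. Combined with
`2 min u v + |u - v| = u + v`, and with the fact that multiplication by `c ≠ 0` permutes `ZMod q`
(so every nonzero row sums to `∑ φ = m (m + 1)`), this gives
`2 D a b + D (a - b) (a + b) = 2 m (m + 1)`. Applied to the pair `(a - b, a + b)` it leads to
`D (-2b) (2a) = D a b`, so `D a b = D (a - b) (a + b) = 2 m (m + 1) / 3`; and since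
`φ (-x) = φ x`, the full row distance is twice the one over `j = 1, …, m`.
Columns are permutations because `φ x = φ y` only for `x = ±y`, and no two of `1, …, m` agree up
to sign modulo `q`.
-/

/-- Entry `(i,j)` of the design `E`: `min(i·j mod q, q - (i·j mod q))`. -/
def Eglp (q i j : ℕ) : ℕ :=
  min (i * j % q) (q - i * j % q)

open Finset

namespace ZMod

lemma natAbs_valMinAbs_le_natAbs {n : ℕ} [NeZero n] (x : ZMod n) {z : ℤ}
    (hz : (z : ZMod n) = x) : x.valMinAbs.natAbs ≤ z.natAbs :=
  natAbs_min_of_le_div_two n _ _ (by rw [coe_valMinAbs, hz]) (natAbs_valMinAbs_le x)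

lemma natAbs_sub_natAbs_valMinAbs {n : ℕ} [NeZero n] (s t : ZMod n) :
    ((s.valMinAbs.natAbs : ℤ) - t.valMinAbs.natAbs).natAbs
      = min (s - t).valMinAbs.natAbs (s + t).valMinAbs.natAbs := by
  have hsub := natAbs_valMinAbs_le_natAbs (s - t) (z := s.valMinAbs - t.valMinAbs)
    (by push_cast [coe_valMinAbs]; rfl)
  have hadd := natAbs_valMinAbs_le_natAbs (s + t) (z := s.valMinAbs + t.valMinAbs)
    (by push_cast [coe_valMinAbs]; rfl)
  have h1 := natAbs_valMinAbs_le_natAbs s (z := (s - t).valMinAbs + t.valMinAbs)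
    (by push_cast [coe_valMinAbs]; ring)
  have h2 := natAbs_valMinAbs_le_natAbs t (z := s.valMinAbs - (s - t).valMinAbs)
    (by push_cast [coe_valMinAbs]; ring)
  have h3 := natAbs_valMinAbs_le_natAbs s (z := (s + t).valMinAbs - t.valMinAbs)
    (by push_cast [coe_valMinAbs]; ring)
  have h4 := natAbs_valMinAbs_le_natAbs t (z := (s + t).valMinAbs - s.valMinAbs)
    (by push_cast [coe_valMinAbs]; ring)
  omega

lemma sum_eq_sum_range {M : Type*} [AddCommMonoid M] (n : ℕ) [NeZero n] (f : ZMod n → M) :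
    ∑ x : ZMod n, f x = ∑ k ∈ range n, f k :=
  sum_nbij' val (↑) (fun x _ => mem_range.2 x.val_lt) (fun _ _ => mem_univ _)
    (fun x _ => natCast_zmod_val x) (fun _ hk => val_natCast_of_lt (mem_range.1 hk))
    (fun x _ => by rw [natCast_zmod_val])

lemma sum_eq_add_two_nsmul_sum_Icc_of_even {M : Type*} [AddCommMonoid M] (m : ℕ)
    (f : ZMod (2 * m + 1) → M) (hf : ∀ x, f (-x) = f x) :
    ∑ x, f x = f 0 + 2 • ∑ k ∈ Icc 1 m, f k := by
  have hreflect : ∑ k ∈ range m, f ↑(m + 1 + k) = ∑ k ∈ range m, f ↑(k + 1) := by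
    rw [← sum_range_reflect]
    refine sum_congr rfl fun k hk => ?_
    rw [← hf]
    congr 1
    refine neg_eq_of_add_eq_zero_right ?_
    rw [← Nat.cast_add, natCast_eq_zero_iff]
    exact dvd_of_eq (by have := mem_range.1 hk; omega)
  rw [sum_eq_sum_range, show range (2 * m + 1) = range (m + 1 + m) by ring_nf, sum_range_add,
    sum_range_succ', hreflect, ← Ico_add_one_right_eq_Icc, sum_Ico_eq_sum_range]
  simp only [Nat.cast_zero, add_tsub_cancel_right, two_nsmul, add_comm 1]
  abel

lemma natAbs_valMinAbs_natCast_of_le {m k : ℕ} (hk : k ≤ m) :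
    (k : ZMod (2 * m + 1)).valMinAbs.natAbs = k := by
  rw [valMinAbs_natCast_of_le_half (by omega), Int.natAbs_natCast]

lemma natCast_ne_zero_of_mem_Icc_s13 {m k : ℕ} (hk : k ∈ Icc 1 m) : (k : ZMod (2 * m + 1)) ≠ 0 := by
  rw [mem_Icc] at hk
  intro h
  have := natAbs_valMinAbs_natCast_of_le hk.2
  rw [h, valMinAbs_zero] at this
  omega

lemma eq_of_natCast_eq_or_eq_neg {m k l : ℕ} (hk : k ∈ Icc 1 m) (hl : l ∈ Icc 1 m)
    (h : (k : ZMod (2 * m + 1)) = l ∨ (k : ZMod (2 * m + 1)) = -l) : k = l := by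
  rw [mem_Icc] at hk hl
  rw [← natAbs_valMinAbs_eq_natAbs_valMinAbs, natAbs_valMinAbs_natCast_of_le hk.2,
    natAbs_valMinAbs_natCast_of_le hl.2] at h
  exact h

lemma sum_Icc_one_id_mul_two (m : ℕ) : (∑ k ∈ Icc 1 m, k) * 2 = m * (m + 1) := by
  have := sum_range_id_mul_two (m + 1)
  rw [sum_range_succ'] at this
  rw [← Ico_add_one_right_eq_Icc, sum_Ico_eq_sum_range, add_tsub_cancel_right]
  simpa [add_comm 1, mul_comm] using this

lemma sum_natAbs_valMinAbs (m : ℕ) :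
    ∑ x : ZMod (2 * m + 1), x.valMinAbs.natAbs = m * (m + 1) := by
  rw [sum_eq_add_two_nsmul_sum_Icc_of_even m _ natAbs_valMinAbs_neg, valMinAbs_zero,
    smul_eq_mul, Int.natAbs_zero, zero_add, ← sum_Icc_one_id_mul_two, mul_comm,
    sum_congr rfl fun k hk => natAbs_valMinAbs_natCast_of_le (mem_Icc.1 hk).2]

end ZMod

open ZMod

def rowDist {n : ℕ} [NeZero n] (a b : ZMod n) : ℕ :=
  ∑ y : ZMod n, (((a * y).valMinAbs.natAbs : ℤ) - (b * y).valMinAbs.natAbs).natAbs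

lemma rowDist_comm {n : ℕ} [NeZero n] (a b : ZMod n) : rowDist a b = rowDist b a :=
  sum_congr rfl fun _ _ => by omega

lemma rowDist_neg_left {n : ℕ} [NeZero n] (a b : ZMod n) : rowDist (-a) b = rowDist a b :=
  sum_congr rfl fun _ _ => by rw [neg_mul, natAbs_valMinAbs_neg]

section Prime

variable {p : ℕ} [Fact p.Prime]

lemma sum_comp_mul_left {M : Type*} [AddCommMonoid M] {u : ZMod p} (hu : u ≠ 0)
    (f : ZMod p → M) : ∑ y, f (u * y) = ∑ y, f y :=
  Equiv.sum_comp (Equiv.mulLeft₀ u hu) f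

lemma rowDist_mul_mul {u : ZMod p} (hu : u ≠ 0) (a b : ZMod p) :
    rowDist (u * a) (u * b) = rowDist a b := by
  unfold rowDist
  conv_rhs => rw [← sum_comp_mul_left hu]
  simp only [mul_assoc, mul_left_comm a u, mul_left_comm b u]

end Prime

section OddPrime

variable {m : ℕ} [Fact (2 * m + 1).Prime]

lemma sum_natAbs_valMinAbs_mul {a : ZMod (2 * m + 1)} (ha : a ≠ 0) :
    ∑ y, (a * y).valMinAbs.natAbs = m * (m + 1) := by
  rw [sum_comp_mul_left ha (fun x => x.valMinAbs.natAbs), sum_natAbs_valMinAbs]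

-- Pointwise `2 min u v + |u - v| = u + v`, for `u, v` the entries of the rows `a ∓ b`.
lemma two_mul_rowDist_add_rowDist {a b : ZMod (2 * m + 1)} (hsub : a - b ≠ 0)
    (hadd : a + b ≠ 0) : 2 * rowDist a b + rowDist (a - b) (a + b) = 2 * (m * (m + 1)) := by
  have key (y : ZMod (2 * m + 1)) :
      2 * (((a * y).valMinAbs.natAbs : ℤ) - (b * y).valMinAbs.natAbs).natAbs
        + ((((a - b) * y).valMinAbs.natAbs : ℤ) - ((a + b) * y).valMinAbs.natAbs).natAbs
      = ((a - b) * y).valMinAbs.natAbs + ((a + b) * y).valMinAbs.natAbs := by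
    rw [natAbs_sub_natAbs_valMinAbs, ← sub_mul, ← add_mul]
    omega
  rw [rowDist, rowDist, mul_sum, ← sum_add_distrib, sum_congr rfl fun y _ => key y,
    sum_add_distrib, sum_natAbs_valMinAbs_mul hsub, sum_natAbs_valMinAbs_mul hadd, two_mul]

lemma three_mul_rowDist {a b : ZMod (2 * m + 1)} (ha : a ≠ 0) (hb : b ≠ 0) (hsub : a - b ≠ 0)
    (hadd : a + b ≠ 0) : 3 * rowDist a b = 2 * (m * (m + 1)) := by
  have htwo : (2 : ZMod (2 * m + 1)) ≠ 0 :=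
    Ring.two_ne_zero (by rw [ringChar_zmod_n]; omega)
  have h₁ := two_mul_rowDist_add_rowDist hsub hadd
  have h₂ := two_mul_rowDist_add_rowDist (a := a - b) (b := a + b)
    (by rw [show a - b - (a + b) = -(2 * b) by ring]; exact neg_ne_zero.2 (mul_ne_zero htwo hb))
    (by rw [show a - b + (a + b) = 2 * a by ring]; exact mul_ne_zero htwo ha)
  have hback : rowDist (a - b - (a + b)) (a - b + (a + b)) = rowDist a b := by
    rw [show a - b - (a + b) = -(2 * b) by ring, show a - b + (a + b) = 2 * a by ring,
      rowDist_neg_left, rowDist_mul_mul htwo, rowDist_comm]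
  omega

lemma rowDist_eq_two_mul_sum_Icc (a b : ZMod (2 * m + 1)) :
    rowDist a b = 2 * ∑ j ∈ Icc 1 m,
      (((a * j).valMinAbs.natAbs : ℤ) - (b * j).valMinAbs.natAbs).natAbs := by
  rw [rowDist, sum_eq_add_two_nsmul_sum_Icc_of_even m _ fun y => by
    simp only [mul_neg, natAbs_valMinAbs_neg], smul_eq_mul]
  simp

end OddPrime

lemma Eglp_eq_natAbs_valMinAbs (q i j : ℕ) [NeZero q] :
    Eglp q i j = ((i : ZMod q) * j).valMinAbs.natAbs := by
  rw [valMinAbs_natAbs_eq_min, ← Nat.cast_mul, val_natCast, Eglp]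

lemma image_Eglp_Icc {m : ℕ} [Fact (2 * m + 1).Prime] {j : ℕ} (hj : j ∈ Icc 1 m) :
    (Icc 1 m).image (fun i => Eglp (2 * m + 1) i j) = Icc 1 m := by
  have hj₀ : (j : ZMod (2 * m + 1)) ≠ 0 := natCast_ne_zero_of_mem_Icc_s13 hj
  have hmaps : Set.MapsTo (fun i => Eglp (2 * m + 1) i j) (Icc 1 m) (Icc 1 m) := by
    intro i hi
    have hij : (i : ZMod (2 * m + 1)) * j ≠ 0 := mul_ne_zero (natCast_ne_zero_of_mem_Icc_s13 hi) hj₀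
    have hle := natAbs_valMinAbs_le ((i : ZMod (2 * m + 1)) * (j : ZMod (2 * m + 1)))
    have hpos := Int.natAbs_pos.2 ((valMinAbs_eq_zero _).not.2 hij)
    simp only [coe_Icc, Set.mem_Icc, Eglp_eq_natAbs_valMinAbs]
    omega
  have hinj : Set.InjOn (fun i => Eglp (2 * m + 1) i j) (Icc 1 m) := by
    intro i hi i' hi' h
    simp only [Eglp_eq_natAbs_valMinAbs, natAbs_valMinAbs_eq_natAbs_valMinAbs, ← neg_mul,
      mul_left_inj' hj₀] at h
    exact eq_of_natCast_eq_or_eq_neg hi hi' h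
  exact eq_of_subset_of_card_le (image_subset_iff.2 hmaps) (card_image_of_injOn hinj).ge

theorem stmt_13_general (m : ℕ) (hq : Nat.Prime (2 * m + 1)) :
    (∀ j ∈ Finset.Icc 1 m,
        Finset.image (fun i => Eglp (2 * m + 1) i j) (Finset.Icc 1 m) = Finset.Icc 1 m) ∧
    (∀ i ∈ Finset.Icc 1 m, ∀ i' ∈ Finset.Icc 1 m, i ≠ i' →
        ∑ j ∈ Finset.Icc 1 m,
          ((Eglp (2 * m + 1) i j : ℤ) - (Eglp (2 * m + 1) i' j : ℤ)).natAbs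
          = m * (m + 1) / 3) := by
  have := Fact.mk hq
  refine ⟨fun j hj => image_Eglp_Icc hj, fun i hi i' hi' hne => ?_⟩
  have hsub : (i : ZMod (2 * m + 1)) - i' ≠ 0 :=
    sub_ne_zero.2 fun h => hne (eq_of_natCast_eq_or_eq_neg hi hi' (.inl h))
  have hadd : (i : ZMod (2 * m + 1)) + i' ≠ 0 :=
    fun h => hne (eq_of_natCast_eq_or_eq_neg hi hi' (.inr (eq_neg_of_add_eq_zero_left h)))
  have hdist := three_mul_rowDist (natCast_ne_zero_of_mem_Icc_s13 hi)
    (natCast_ne_zero_of_mem_Icc_s13 hi') hsub hadd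
  rw [rowDist_eq_two_mul_sum_Icc] at hdist
  simp only [Eglp_eq_natAbs_valMinAbs]
  omega

/-- let `q = 2m+1` be an odd prime with `m ≥ 1` and let
`E(i,j) = min(i·j mod q, q - (i·j mod q))` for `1 ≤ i,j ≤ m`.  Then every column of
`E` is a permutation of `{1,…,m}` (so `E` is an `m × m` Latin hypercube design), and
every pair of distinct rows of `E` has `L1`-distance exactly `m(m+1)/3`. -/
theorem stmt_13 (m : ℕ) (hm : 1 ≤ m) (hq : Nat.Prime (2 * m + 1)) :
    (∀ j ∈ Finset.Icc 1 m,
        Finset.image (fun i => Eglp (2 * m + 1) i j) (Finset.Icc 1 m) = Finset.Icc 1 m) ∧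
    (∀ i ∈ Finset.Icc 1 m, ∀ i' ∈ Finset.Icc 1 m, i ≠ i' →
        ∑ j ∈ Finset.Icc 1 m,
          ((Eglp (2 * m + 1) i j : ℤ) - (Eglp (2 * m + 1) i' j : ℤ)).natAbs
          = m * (m + 1) / 3) :=
  stmt_13_general m hq
end

section
/- Let k ≥ 2 and m ≥ 1 be integers and n = km. Let X be an n×m Latin hypercube design and O an n×m matrix each of whose rows is a permutation of {1,...,m}, and suppose (X,O) is marginally coupled. Then the row indices {1,...,n} can be partitioned into k blocks of size m such that, within each block, every column of O contains each of the symbols 1,...,m exactly once; that is, up to a row permutation, O is the row juxtaposition of k Latin squares of order m. -/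
/-!
Sort the rows into `k` blocks by the level `⌊(X(i,1) - 1)/m⌋` of the first column of `X`.
Fix a column `j` of `O`. Marginal coupling says that for every symbol `c` the `k` rows with
`O(i,j) = c` carry the `k` levels `0, …, k-1`, each once. So the pair (symbol in column `j`,
level) is a bijection from the rows onto `{1,…,m} × {0,…,k-1}`, and each block meets each
symbol of column `j` in exactly one row.
-/

/-- `(X, O)` with `n = k·m` rows is marginally coupled if for every column `j` of `O`,
every level `c ∈ {1,…,m}`, and every column `j'` of `X`, the level `c` appears in
column `j` of `O` exactly `k` times and the collapsed values `⌊(X(i,j') - 1)/m⌋` over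
those `k` rows are exactly `0, 1, …, k-1`, each occurring once. -/
def MargCoupled (k m : ℕ) (X O : Fin (k * m) → Fin m → ℕ) : Prop :=
  ∀ j j' : Fin m, ∀ c ∈ Finset.Icc 1 m,
    (Finset.univ.filter fun i => O i j = c).card = k ∧
    (Finset.univ.filter fun i => O i j = c).image (fun i => (X i j' - 1) / m)
      = Finset.range k

open Finset

section Fibers

variable {ι β γ : Type*} [Fintype ι] [DecidableEq β] [DecidableEq γ]
  {o : ι → β} {ℓ : ι → γ} {S : Finset β} {T : Finset γ}

theorem apply_mem_of_forall_image_fiber_eq (ho : ∀ i, o i ∈ S)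
    (hcover : ∀ c ∈ S, (univ.filter (o · = c)).image ℓ = T) (i : ι) : ℓ i ∈ T := by
  rw [← hcover (o i) (ho i)]
  exact mem_image_of_mem ℓ (mem_filter.2 ⟨mem_univ i, rfl⟩)

theorem image_fiber_eq_of_forall_image_fiber_eq (ho : ∀ i, o i ∈ S)
    (hcover : ∀ c ∈ S, (univ.filter (o · = c)).image ℓ = T) {t : γ} (ht : t ∈ T) :
    (univ.filter (ℓ · = t)).image o = S := by
  refine Subset.antisymm (fun c hc => ?_) (fun c hc => ?_)
  · obtain ⟨i, -, rfl⟩ := mem_image.1 hc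
    exact ho i
  · rw [← hcover c hc] at ht
    obtain ⟨i, hi, rfl⟩ := mem_image.1 ht
    exact mem_image.2 ⟨i, by simpa using (mem_filter.1 hi).2⟩

/-- Each fiber of `o` has `#T` elements and is mapped onto `T` by `ℓ`, hence injectively. -/
theorem injOn_fiber_of_forall_image_fiber_eq (ho : ∀ i, o i ∈ S)
    (hcard : ∀ c ∈ S, (univ.filter (o · = c)).card = T.card)
    (hcover : ∀ c ∈ S, (univ.filter (o · = c)).image ℓ = T) (t : γ) :
    Set.InjOn o (univ.filter (ℓ · = t) : Set ι) := by
  intro i hi i' hi' hoi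
  simp only [coe_filter, mem_univ, true_and, Set.mem_ofPred_eq] at hi hi'
  have hinj : Set.InjOn ℓ (univ.filter (o · = o i) : Set ι) := by
    rw [← card_image_iff, hcover _ (ho i), hcard _ (ho i)]
  exact hinj (by simp) (by simp [hoi]) (hi.trans hi'.symm)

theorem card_fiber_eq_of_forall_image_fiber_eq (ho : ∀ i, o i ∈ S)
    (hcard : ∀ c ∈ S, (univ.filter (o · = c)).card = T.card)
    (hcover : ∀ c ∈ S, (univ.filter (o · = c)).image ℓ = T) {t : γ} (ht : t ∈ T) :
    (univ.filter (ℓ · = t)).card = S.card := by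
  rw [← card_image_of_injOn (injOn_fiber_of_forall_image_fiber_eq ho hcard hcover t),
    image_fiber_eq_of_forall_image_fiber_eq ho hcover ht]

end Fibers

theorem stmt_14_general (k m : ℕ) (hm : 1 ≤ m)
    (X O : Fin (k * m) → Fin m → ℕ)
    (hO : ∀ i : Fin (k * m), Finset.image (fun j => O i j) Finset.univ = Finset.Icc 1 m)
    (hMC : MargCoupled k m X O) :
    ∃ B : Fin (k * m) → Fin k, ∀ t : Fin k,
      (Finset.univ.filter fun i => B i = t).card = m ∧
      ∀ j : Fin m,
        (Finset.univ.filter fun i => B i = t).image (fun i => O i j) = Finset.Icc 1 m := by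
  let j₀ : Fin m := ⟨0, hm⟩
  let level : Fin (k * m) → ℕ := fun i => (X i j₀ - 1) / m
  have hsymb : ∀ j i, O i j ∈ Icc 1 m := fun j i => hO i ▸ mem_image_of_mem _ (mem_univ j)
  have hcard : ∀ j, ∀ c ∈ Icc 1 m, (univ.filter (O · j = c)).card = (range k).card :=
    fun j c hc => (card_range k).symm ▸ (hMC j j₀ c hc).1
  have hcover : ∀ j, ∀ c ∈ Icc 1 m, (univ.filter (O · j = c)).image level = range k :=
    fun j c hc => (hMC j j₀ c hc).2
  have hlt (i) : level i < k :=
    mem_range.1 (apply_mem_of_forall_image_fiber_eq (hsymb j₀) (hcover j₀) i)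
  refine ⟨fun i => ⟨level i, hlt i⟩, fun t => ?_⟩
  have hblock : (univ.filter fun i => (⟨level i, hlt i⟩ : Fin k) = t)
      = univ.filter (level · = t) := by
    simp only [Fin.ext_iff]
  rw [hblock]
  have ht : (t : ℕ) ∈ range k := mem_range.2 t.isLt
  refine ⟨?_, fun j => image_fiber_eq_of_forall_image_fiber_eq (hsymb j) (hcover j) ht⟩
  simpa using card_fiber_eq_of_forall_image_fiber_eq (hsymb j₀) (hcard j₀) (hcover j₀) ht

/-- let `n = k·m` with `k ≥ 2`, `m ≥ 1`, `X` an `n × m` Latin hypercube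
design (each column a permutation of `{1,…,n}`), `O` an `n × m` matrix each of whose
rows is a permutation of `{1,…,m}`, and suppose `(X, O)` is marginally coupled.  Then
the rows can be partitioned into `k` blocks of size `m` such that within each block
every column of `O` contains each symbol of `{1,…,m}` exactly once (i.e. up to a row
permutation, `O` is the row juxtaposition of `k` Latin squares of order `m`). -/
theorem stmt_14 (k m : ℕ) (hk : 2 ≤ k) (hm : 1 ≤ m)
    (X O : Fin (k * m) → Fin m → ℕ)
    (hX : ∀ j : Fin m, Finset.image (fun i => X i j) Finset.univ = Finset.Icc 1 (k * m))
    (hO : ∀ i : Fin (k * m), Finset.image (fun j => O i j) Finset.univ = Finset.Icc 1 m)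
    (hMC : MargCoupled k m X O) :
    ∃ B : Fin (k * m) → Fin k, ∀ t : Fin k,
      (Finset.univ.filter fun i => B i = t).card = m ∧
      ∀ j : Fin m,
        (Finset.univ.filter fun i => B i = t).image (fun i => O i j) = Finset.Icc 1 m :=
  stmt_14_general k m hm X O hO hMC
end

section
/- Let k ≥ 2 and m ≥ 1 be integers and n = km. Let O be an n×m matrix each of whose rows is a permutation of {1,...,m}, and suppose the row indices {1,...,n} can be partitioned into k blocks of size m such that, within each block, every column of O contains each of the symbols 1,...,m exactly once. Then there exists an n×m Latin hypercube design X such that (X,O) is marginally coupled. -/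
open Finset

theorem Nat.mul_add_sub_one_div {b m o : ℕ} (ho : 1 ≤ o) (hom : o ≤ m) :
    (b * m + o - 1) / m = b := by
  rw [Nat.add_sub_assoc ho, mul_comm, Nat.mul_add_div (by omega), Nat.div_eq_of_lt (by omega),
    add_zero]

namespace MarginalCoupling

variable {ι J : Type*} [Fintype ι] {k m : ℕ}

def IsLatinBlocking (B : ι → Fin k) (O : ι → J → ℕ) (m : ℕ) : Prop :=
  ∀ t : Fin k, (univ.filter fun i => B i = t).card = m ∧
    ∀ j : J, (univ.filter fun i => B i = t).image (fun i => O i j) = Icc 1 m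

def blockDesign (m : ℕ) (B : ι → Fin k) (O : ι → J → ℕ) (i : ι) (j : J) : ℕ :=
  (B i : ℕ) * m + O i j

variable {B : ι → Fin k} {O : ι → J → ℕ}

namespace IsLatinBlocking

theorem apply_mem_Icc (h : IsLatinBlocking B O m) (i : ι) (j : J) : O i j ∈ Icc 1 m := by
  rw [← (h (B i)).2 j]
  exact mem_image_of_mem _ (mem_filter.2 ⟨mem_univ i, rfl⟩)

theorem eq_of_block_eq (h : IsLatinBlocking B O m) (j : J) {i i' : ι} (hb : B i = B i')
    (ho : O i j = O i' j) : i = i' := by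
  have hcard : ((univ.filter fun x => B x = B i).image fun x => O x j).card
      = (univ.filter fun x => B x = B i).card := by
    rw [(h (B i)).2 j, (h (B i)).1, Nat.card_Icc, Nat.add_sub_cancel]
  exact injOn_of_card_image_eq hcard (by simp) (by simp [hb]) ho

theorem image_block_fiber (h : IsLatinBlocking B O m) (j : J) {c : ℕ} (hc : c ∈ Icc 1 m) :
    (univ.filter fun i => O i j = c).image B = univ := by
  refine eq_univ_of_forall fun t => ?_
  rw [← (h t).2 j] at hc
  obtain ⟨i, hi, hic⟩ := mem_image.1 hc
  exact mem_image.2 ⟨i, mem_filter.2 ⟨mem_univ i, hic⟩, (mem_filter.1 hi).2⟩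

theorem card_fiber (h : IsLatinBlocking B O m) (j : J) {c : ℕ} (hc : c ∈ Icc 1 m) :
    (univ.filter fun i => O i j = c).card = k := by
  have hinj : Set.InjOn B (univ.filter fun i => O i j = c) := fun i hi i' hi' hb =>
    h.eq_of_block_eq j hb (by simp_all)
  rw [← card_image_of_injOn hinj, h.image_block_fiber j hc, card_univ, Fintype.card_fin]

theorem collapse_blockDesign (h : IsLatinBlocking B O m) (i : ι) (j : J) :
    (blockDesign m B O i j - 1) / m = B i :=
  have hij := Finset.mem_Icc.1 (h.apply_mem_Icc i j)
  Nat.mul_add_sub_one_div hij.1 hij.2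

theorem injective_blockDesign (h : IsLatinBlocking B O m) (j : J) :
    Function.Injective fun i => blockDesign m B O i j := by
  intro i i' hii'
  have hb : B i = B i' := Fin.ext <| by
    rw [← h.collapse_blockDesign i j, ← h.collapse_blockDesign i' j]
    exact congrArg (fun x => (x - 1) / m) hii'
  refine h.eq_of_block_eq j hb ?_
  simpa [blockDesign, hb] using hii'

theorem blockDesign_mem_Icc (h : IsLatinBlocking B O m) (i : ι) (j : J) :
    blockDesign m B O i j ∈ Icc 1 (k * m) := by
  have hij := Finset.mem_Icc.1 (h.apply_mem_Icc i j)
  have hblock : ((B i : ℕ) + 1) * m ≤ k * m := Nat.mul_le_mul_right m (B i).isLt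
  rw [blockDesign, mem_Icc]
  constructor <;> nlinarith

theorem image_blockDesign (h : IsLatinBlocking B O m) (hι : Fintype.card ι = k * m) (j : J) :
    univ.image (fun i => blockDesign m B O i j) = Icc 1 (k * m) := by
  refine eq_of_subset_of_card_le ?_ ?_
  · exact image_subset_iff.2 fun i _ => h.blockDesign_mem_Icc i j
  · rw [Nat.card_Icc, card_image_of_injective _ (h.injective_blockDesign j), card_univ, hι,
      Nat.add_sub_cancel]

theorem image_collapse_fiber (h : IsLatinBlocking B O m) (j j' : J) {c : ℕ}
    (hc : c ∈ Icc 1 m) :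
    (univ.filter fun i => O i j = c).image (fun i => (blockDesign m B O i j' - 1) / m)
      = range k := by
  simp_rw [h.collapse_blockDesign, ← Function.comp_apply (f := Fin.val), ← image_image,
    h.image_block_fiber j hc, image_fin_univ]

end IsLatinBlocking

end MarginalCoupling

theorem stmt_15_general (k m : ℕ)
    (O : Fin (k * m) → Fin m → ℕ)
    (hB : ∃ B : Fin (k * m) → Fin k, ∀ t : Fin k,
      (Finset.univ.filter fun i => B i = t).card = m ∧
      ∀ j : Fin m,
        (Finset.univ.filter fun i => B i = t).image (fun i => O i j) = Finset.Icc 1 m) :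
    ∃ X : Fin (k * m) → Fin m → ℕ,
      (∀ j : Fin m, Finset.image (fun i => X i j) Finset.univ = Finset.Icc 1 (k * m)) ∧
      MargCoupled k m X O := by
  obtain ⟨B, hB⟩ := hB
  have hLatin : MarginalCoupling.IsLatinBlocking B O m := hB
  refine ⟨MarginalCoupling.blockDesign m B O, hLatin.image_blockDesign (Fintype.card_fin _), ?_⟩
  exact fun j j' c hc => ⟨hLatin.card_fiber j hc, hLatin.image_collapse_fiber j j' hc⟩

/-- let `n = k·m` with `k ≥ 2`, `m ≥ 1`, and let `O` be an `n × m`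
matrix each of whose rows is a permutation of `{1,…,m}` whose rows can be partitioned
into `k` blocks of size `m` such that within each block every column of `O` contains
each symbol of `{1,…,m}` exactly once.  Then there exists an `n × m` Latin hypercube
design `X` such that `(X, O)` is marginally coupled. -/
theorem stmt_15 (k m : ℕ) (hk : 2 ≤ k) (hm : 1 ≤ m)
    (O : Fin (k * m) → Fin m → ℕ)
    (hO : ∀ i : Fin (k * m), Finset.image (fun j => O i j) Finset.univ = Finset.Icc 1 m)
    (hB : ∃ B : Fin (k * m) → Fin k, ∀ t : Fin k,
      (Finset.univ.filter fun i => B i = t).card = m ∧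
      ∀ j : Fin m,
        (Finset.univ.filter fun i => B i = t).image (fun i => O i j) = Finset.Icc 1 m) :
    ∃ X : Fin (k * m) → Fin m → ℕ,
      (∀ j : Fin m, Finset.image (fun i => X i j) Finset.univ = Finset.Icc 1 (k * m)) ∧
      MargCoupled k m X O :=
  stmt_15_general k m O hB
end

section
/- Let p ≥ 5 be an odd prime and m = p−1. For b ∈ {0,...,p−1}, let Ẽ_b be the m×m leave-one-out Williams design with (i,j) entry g_b(W((i·j + b) mod p)), where W is the Williams transformation and g_b(x) = x+1 if x < W(b), g_b(x) = x if x > W(b). Then for any b, b' ∈ {0,...,p−1} and any row indices i, i' ∈ {1,...,m} with (b,i) ≠ (b',i'), the Hamming distance between row i of Ẽ_b and row i' of Ẽ_{b'} is at least m−3. Consequently, the p(p−1)×(p−1) design obtained by stacking Ẽ_0, Ẽ_1, ..., Ẽ_{p−1} has minimum pairwise Hamming distance at least m−3. -/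
lemma key (p u u' b b' : ℕ) (hp5 : 5 ≤ p) (hodd : p % 2 = 1)
    (hu : u < p) (hu' : u' < p) (hb : b < p) (hb' : b' < p)
    (h : (if Wtr p u < Wtr p b then Wtr p u + 1 else Wtr p u)
       = (if Wtr p u' < Wtr p b' then Wtr p u' + 1 else Wtr p u')) :
    u = u' ∨
    (u + u' = p ∧ b + b' ≠ 0 ∧ (b + b' = p → u = b')) ∨
    (u + u' = p - 1 ∧ (b + b' = p - 1 → u = b')) := by
  unfold Wtr at h
  split_ifs at h <;> omega

lemma dvd_interval (p s : ℕ) (hdvd : p ∣ s) (h1 : 0 < s) (h2 : s < 2 * p) : s = p := by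
  obtain ⟨c, rfl⟩ := hdvd
  have hc2 : c < 2 := Nat.lt_of_mul_lt_mul_left (show p * c < p * 2 by linarith)
  have hc1 : c ≠ 0 := by rintro rfl; simp at h1
  have : c = 1 := by omega
  subst this; ring

lemma Etil_eq (p b i j : ℕ) :
    Etil p b i j = if Wtr p ((i * j + b) % p) < Wtr p b
      then Wtr p ((i * j + b) % p) + 1 else Wtr p ((i * j + b) % p) := rfl

set_option maxHeartbeats 2000000 in
/-- let `p ≥ 5` be an odd prime and `m = p - 1`.  For any
`b, b' ∈ {0,…,p-1}` and any row indices `i, i' ∈ {1,…,m}` with `(b,i) ≠ (b',i')`,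
the Hamming distance between row `i` of `Ẽ_b` and row `i'` of `Ẽ_{b'}` is at least
`m - 3`; consequently, the design obtained by stacking `Ẽ_0, …, Ẽ_{p-1}` has
minimum pairwise Hamming distance at least `m - 3`. -/
theorem stmt_16 (p : ℕ) (hp : p.Prime) (hodd : Odd p) (hp5 : 5 ≤ p) :
    ∀ b < p, ∀ b' < p, ∀ i ∈ Finset.Icc 1 (p - 1), ∀ i' ∈ Finset.Icc 1 (p - 1),
      (b, i) ≠ (b', i') →
      (p - 1) - 3 ≤
        ((Finset.Icc 1 (p - 1)).filter fun j => Etil p b i j ≠ Etil p b' i' j).card := by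
  intro b hb b' hb' i hi i' hi' hne
  haveI : Fact p.Prime := ⟨hp⟩
  haveI : NeZero p := ⟨hp.ne_zero⟩
  have hodd' : p % 2 = 1 := Nat.odd_iff.mp hodd
  rw [Finset.mem_Icc] at hi hi'
  set E := Finset.Icc 1 (p - 1) with hE
  set A := E.filter (fun j => Etil p b i j = Etil p b' i' j) with hA
  -- cast helpers
  have hcinj : ∀ x y : ℕ, x < p → y < p → (x : ZMod p) = y → x = y := by
    intro x y hx hy hxy
    have := congrArg ZMod.val hxy
    rwa [ZMod.val_cast_of_lt hx, ZMod.val_cast_of_lt hy] at this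
  have hip : i < p := by omega
  have hi'p : i' < p := by omega
  have hine : (i : ZMod p) ≠ 0 := by
    intro h
    have := hcinj i 0 (by omega) (by omega) (by simpa using h)
    omega
  -- the main card bound
  have hcard : A.card ≤ 3 := by
    classical
    have hsub : ∀ j ∈ A, (fun j => if (i*j+b)%p = (i'*j+b')%p then (0 : Fin 3)
        else if (i*j+b)%p + (i'*j+b')%p = p then 1 else 2) j ∈ (Finset.univ : Finset (Fin 3)) :=
      fun _ _ => Finset.mem_univ _
    have hinj : Set.InjOn (fun j => if (i*j+b)%p = (i'*j+b')%p then (0 : Fin 3)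
        else if (i*j+b)%p + (i'*j+b')%p = p then 1 else 2) A := by
      intro j hj k hk hfjk
      replace hfjk : (if (i*j+b)%p = (i'*j+b')%p then (0 : Fin 3)
          else if (i*j+b)%p + (i'*j+b')%p = p then 1 else 2)
        = (if (i*k+b)%p = (i'*k+b')%p then (0 : Fin 3)
          else if (i*k+b)%p + (i'*k+b')%p = p then 1 else 2) := hfjk
      simp only [hA, Finset.mem_coe, Finset.mem_filter, hE, Finset.mem_Icc] at hj hk
      obtain ⟨⟨hj1, hj2⟩, hjE⟩ := hj
      obtain ⟨⟨hk1, hk2⟩, hkE⟩ := hk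
      have hjp : j < p := by omega
      have hkp : k < p := by omega
      rw [Etil_eq, Etil_eq] at hjE hkE
      have dj := key p ((i*j+b)%p) ((i'*j+b')%p) b b' hp5 hodd'
        (Nat.mod_lt _ (by omega)) (Nat.mod_lt _ (by omega)) hb hb' hjE
      have dk := key p ((i*k+b)%p) ((i'*k+b')%p) b b' hp5 hodd'
        (Nat.mod_lt _ (by omega)) (Nat.mod_lt _ (by omega)) hb hb' hkE
      clear hjE hkE hsub hodd
      -- cast equation builders
      have cast1 : ∀ x y : ℕ, x % p = y % p → (x : ZMod p) = y := by
        intro x y h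
        rw [← ZMod.natCast_mod x p, ← ZMod.natCast_mod y p, h]
      have cast2 : ∀ x y c : ℕ, x % p + y % p = c → (x : ZMod p) + y = c := by
        intro x y c h
        rw [← ZMod.natCast_mod x p, ← ZMod.natCast_mod y p, ← Nat.cast_add, h]
      by_cases c0j : (i*j+b)%p = (i'*j+b')%p
      · by_cases c0k : (i*k+b)%p = (i'*k+b')%p
        · -- type 0
          have ej' : ((i:ZMod p)*j+b) = (i':ZMod p)*j + b' := by
            have := cast1 _ _ c0j; push_cast at this ⊢; linear_combination this
          have ek' : ((i:ZMod p)*k+b) = (i':ZMod p)*k + b' := by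
            have := cast1 _ _ c0k; push_cast at this ⊢; linear_combination this
          by_cases hii : i = i'
          · subst hii
            have hbb : (b : ZMod p) = b' := by linear_combination ej'
            have := hcinj b b' hb hb' hbb
            exact absurd (by rw [this]) hne
          · have hz : ((i:ZMod p) - i') * ((j:ZMod p) - k) = 0 := by
              linear_combination ej' - ek'
            rcases mul_eq_zero.mp hz with h | h
            · exact absurd (hcinj i i' hip hi'p (sub_eq_zero.mp h)) hii
            · exact hcinj j k hjp hkp (sub_eq_zero.mp h)
        · rw [if_pos c0j, if_neg c0k] at hfjk
          split_ifs at hfjk <;> exact absurd hfjk (by decide)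
      · by_cases c0k : (i*k+b)%p = (i'*k+b')%p
        · rw [if_neg c0j, if_pos c0k] at hfjk
          split_ifs at hfjk <;> exact absurd hfjk (by decide)
        · by_cases c1j : (i*j+b)%p + (i'*j+b')%p = p
          · by_cases c1k : (i*k+b)%p + (i'*k+b')%p = p
            · -- type 1
              have ej : ((i:ZMod p)*j+b) + ((i':ZMod p)*j+b') = 0 := by
                have := cast2 _ _ _ c1j
                push_cast at this ⊢
                rw [ZMod.natCast_self] at this
                linear_combination this
              have ek : ((i:ZMod p)*k+b) + ((i':ZMod p)*k+b') = 0 := by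
                have := cast2 _ _ _ c1k
                push_cast at this ⊢
                rw [ZMod.natCast_self] at this
                linear_combination this
              by_cases hii : i + i' = p
              · have hip : (i : ZMod p) + i' = 0 := by
                  have : ((i + i' : ℕ) : ZMod p) = 0 := by rw [hii, ZMod.natCast_self]
                  push_cast at this; exact this
                have hbb : ((b + b' : ℕ) : ZMod p) = 0 := by
                  push_cast; linear_combination ej - (j : ZMod p) * hip
                have hdvd : p ∣ b + b' := (ZMod.natCast_eq_zero_iff _ _).mp hbb
                have hXj : b + b' ≠ 0 ∧ (b + b' = p → (i*j+b)%p = b') := by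
                  rcases dj with h | h | h
                  · exact absurd h c0j
                  · exact h.2
                  · omega
                have hbbp : b + b' = p := dvd_interval p _ hdvd (by omega) (by omega)
                have hXk : (i*k+b)%p = b' := by
                  rcases dk with h | h | h
                  · exact absurd h c0k
                  · exact h.2.2 hbbp
                  · omega
                have euj : ((i:ZMod p)*j+b) = b' := by
                  have := cast1 (i*j+b) b' (by rw [hXj.2 hbbp, Nat.mod_eq_of_lt hb'])
                  push_cast at this ⊢; linear_combination this
                have euk : ((i:ZMod p)*k+b) = b' := by
                  have := cast1 (i*k+b) b' (by rw [hXk, Nat.mod_eq_of_lt hb'])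
                  push_cast at this ⊢; linear_combination this
                have hz : (i:ZMod p) * ((j:ZMod p) - k) = 0 := by
                  linear_combination euj - euk
                rcases mul_eq_zero.mp hz with h | h
                · exact absurd h hine
                · exact hcinj j k hjp hkp (sub_eq_zero.mp h)
              · have hz : ((i:ZMod p) + i') * ((j:ZMod p) - k) = 0 := by
                  linear_combination ej - ek
                rcases mul_eq_zero.mp hz with h | h
                · exfalso
                  have : ((i + i' : ℕ) : ZMod p) = 0 := by push_cast; exact h
                  have hdvd := (ZMod.natCast_eq_zero_iff _ _).mp this
                  have := dvd_interval p _ hdvd (by omega) (by omega)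
                  omega
                · exact hcinj j k hjp hkp (sub_eq_zero.mp h)
            · rw [if_neg c0j, if_neg c0k, if_pos c1j, if_neg c1k] at hfjk
              exact absurd hfjk (by decide)
          · by_cases c1k : (i*k+b)%p + (i'*k+b')%p = p
            · rw [if_neg c0j, if_neg c0k, if_neg c1j, if_pos c1k] at hfjk
              exact absurd hfjk (by decide)
            · -- type 2
              have hYj : (i*j+b)%p + (i'*j+b')%p = p - 1 ∧ (b + b' = p - 1 → (i*j+b)%p = b') := by
                rcases dj with h | h | h
                · exact absurd h c0j
                · exact absurd h.1 c1j
                · exact h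
              have hYk : (i*k+b)%p + (i'*k+b')%p = p - 1 ∧ (b + b' = p - 1 → (i*k+b)%p = b') := by
                rcases dk with h | h | h
                · exact absurd h c0k
                · exact absurd h.1 c1k
                · exact h
              have hpm1 : ((p - 1 : ℕ) : ZMod p) = -1 := by
                rw [Nat.cast_sub (by omega : 1 ≤ p), ZMod.natCast_self]; ring
              have ej : ((i:ZMod p)*j+b) + ((i':ZMod p)*j+b') = -1 := by
                have := cast2 _ _ _ hYj.1
                rw [hpm1] at this
                push_cast at this ⊢
                linear_combination this
              have ek : ((i:ZMod p)*k+b) + ((i':ZMod p)*k+b') = -1 := by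
                have := cast2 _ _ _ hYk.1
                rw [hpm1] at this
                push_cast at this ⊢
                linear_combination this
              by_cases hii : i + i' = p
              · have hip : (i : ZMod p) + i' = 0 := by
                  have : ((i + i' : ℕ) : ZMod p) = 0 := by rw [hii, ZMod.natCast_self]
                  push_cast at this; exact this
                have hbb : ((b + b' + 1 : ℕ) : ZMod p) = 0 := by
                  push_cast; linear_combination ej - (j : ZMod p) * hip
                have hdvd : p ∣ b + b' + 1 := (ZMod.natCast_eq_zero_iff _ _).mp hbb
                have hbbp : b + b' = p - 1 := by
                  have := dvd_interval p _ hdvd (by omega) (by omega)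
                  omega
                have euj : ((i:ZMod p)*j+b) = b' := by
                  have := cast1 (i*j+b) b' (by rw [hYj.2 hbbp, Nat.mod_eq_of_lt hb'])
                  push_cast at this ⊢; linear_combination this
                have euk : ((i:ZMod p)*k+b) = b' := by
                  have := cast1 (i*k+b) b' (by rw [hYk.2 hbbp, Nat.mod_eq_of_lt hb'])
                  push_cast at this ⊢; linear_combination this
                have hz : (i:ZMod p) * ((j:ZMod p) - k) = 0 := by
                  linear_combination euj - euk
                rcases mul_eq_zero.mp hz with h | h
                · exact absurd h hine
                · exact hcinj j k hjp hkp (sub_eq_zero.mp h)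
              · have hz : ((i:ZMod p) + i') * ((j:ZMod p) - k) = 0 := by
                  linear_combination ej - ek
                rcases mul_eq_zero.mp hz with h | h
                · exfalso
                  have : ((i + i' : ℕ) : ZMod p) = 0 := by push_cast; exact h
                  have hdvd := (ZMod.natCast_eq_zero_iff _ _).mp this
                  have := dvd_interval p _ hdvd (by omega) (by omega)
                  omega
                · exact hcinj j k hjp hkp (sub_eq_zero.mp h)
    calc A.card ≤ (Finset.univ : Finset (Fin 3)).card :=
      Finset.card_le_card_of_injOn _ hsub hinj
    _ = 3 := by simp
  -- conclude
  have hEcard : E.card = p - 1 := by rw [hE, Nat.card_Icc]; omega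
  have hsplit : ((E.filter fun j => Etil p b i j ≠ Etil p b' i' j)).card + A.card = E.card := by
    rw [hA]
    simp only [ne_eq]
    rw [Finset.filter_not, Finset.card_sdiff_of_subset (Finset.filter_subset _ _)]
    have := Finset.card_filter_le E (fun j => Etil p b i j = Etil p b' i' j)
    omega
  omega
end

section
/- Let m ≥ 2 and n = 2m. Let X be an n×m Latin hypercube design and O an n×m matrix each of whose rows is a permutation of {1,...,m}, and suppose (X,O) is marginally coupled (with k = 2). Suppose every pair of distinct rows of O has Hamming distance at least m−2, and the number of unordered pairs of distinct rows of O with Hamming distance exactly m−2 is less than m²/2. Then the minimum pairwise L1-distance of X satisfies d_1(X) ≤ ⌊(m+1)m/3⌋, and the minimum pairwise squared L2-distance of X is at most ⌊m²(m+1)/6⌋. -/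
open Finset

/-- Hamming distance between rows `i` and `i'` of `O`. -/
def hamDist {n m : ℕ} (O : Fin n → Fin m → ℕ) (i i' : Fin n) : ℕ :=
  (Finset.univ.filter fun j : Fin m => O i j ≠ O i' j).card

namespace S18


def dN (a b : ℕ) : ℕ := ((a:ℤ) - b).natAbs

def f1 (m : ℕ) : ℕ := ∑ a ∈ range m, ∑ b ∈ range m, dN a b
def f2 (m : ℕ) : ℕ := ∑ a ∈ range m, ∑ b ∈ range m, dN a b ^ 2

lemma sum_rev (m : ℕ) : 2 * ∑ a ∈ range m, (m - a) = m * (m+1) := by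
  induction m with
  | zero => simp
  | succ n ih =>
    rw [Finset.sum_range_succ]
    have h : ∑ a ∈ range n, (n + 1 - a) = (∑ a ∈ range n, (n - a)) + n := by
      have : ∀ a ∈ range n, n + 1 - a = (n - a) + 1 := by
        intro a ha; have := Finset.mem_range.mp ha; omega
      rw [Finset.sum_congr rfl this, Finset.sum_add_distrib]
      simp
    rw [h]
    have hl : n + 1 - n = 1 := by omega
    rw [hl]
    ring_nf
    ring_nf at ih
    omega

lemma sum_rev2 (m : ℕ) : 6 * ∑ a ∈ range m, (m - a)^2 = m * (m+1) * (2*m+1) := by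
  induction m with
  | zero => simp
  | succ n ih =>
    rw [Finset.sum_range_succ]
    have h : ∑ a ∈ range n, (n + 1 - a)^2
        = (∑ a ∈ range n, ((n - a)^2 + 2 * (n - a) + 1)) := by
      apply Finset.sum_congr rfl
      intro a ha
      have := Finset.mem_range.mp ha
      have h2 : n + 1 - a = (n - a) + 1 := by omega
      rw [h2]; ring
    rw [h, Finset.sum_add_distrib, Finset.sum_add_distrib, ← Finset.mul_sum]
    have hl : n + 1 - n = 1 := by omega
    rw [hl]
    have h2 := sum_rev n
    simp only [Finset.sum_const, Finset.card_range, smul_eq_mul, mul_one]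
    nlinarith [ih, h2]

lemma f1_eq (m : ℕ) : 3 * f1 m + 3 * m = m^3 + 2*m := by
  induction m with
  | zero => simp [f1]
  | succ n ih =>
    have hstep : f1 (n+1) = f1 n + 2 * ∑ a ∈ range n, (n - a) := by
      unfold f1
      rw [Finset.sum_range_succ]
      have hin : ∀ a ∈ range n, ∑ b ∈ range (n+1), dN a b
          = (∑ b ∈ range n, dN a b) + (n - a) := by
        intro a ha
        rw [Finset.sum_range_succ]
        congr 1
        have := Finset.mem_range.mp ha
        simp only [dN]; omega
      rw [Finset.sum_congr rfl hin, Finset.sum_add_distrib, Finset.sum_range_succ]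
      have hlast : ∑ b ∈ range n, dN n b = ∑ b ∈ range n, (n - b) := by
        apply Finset.sum_congr rfl
        intro b hb
        have := Finset.mem_range.mp hb
        simp only [dN]; omega
      have : dN n n = 0 := by simp [dN]
      rw [hlast, this]
      ring
    rw [hstep]
    have h2 := sum_rev n
    ring_nf
    ring_nf at ih h2 ⊢
    nlinarith [ih, h2]

lemma f2_eq (m : ℕ) : 6 * f2 m + m^2 = m^4 := by
  induction m with
  | zero => simp [f2]
  | succ n ih =>
    have hstep : f2 (n+1) = f2 n + 2 * ∑ a ∈ range n, (n - a)^2 := by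
      unfold f2
      rw [Finset.sum_range_succ]
      have hin : ∀ a ∈ range n, ∑ b ∈ range (n+1), dN a b ^ 2
          = (∑ b ∈ range n, dN a b ^ 2) + (n - a)^2 := by
        intro a ha
        rw [Finset.sum_range_succ]
        congr 1
        have := Finset.mem_range.mp ha
        have : dN a n = n - a := by simp only [dN]; omega
        rw [this]
      rw [Finset.sum_congr rfl hin, Finset.sum_add_distrib, Finset.sum_range_succ]
      have hlast : ∑ b ∈ range n, dN n b ^ 2 = ∑ b ∈ range n, (n - b)^2 := by
        apply Finset.sum_congr rfl
        intro b hb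
        have := Finset.mem_range.mp hb
        have : dN n b = n - b := by simp only [dN]; omega
        rw [this]
      have hz : dN n n = 0 := by simp [dN]
      rw [hlast, hz]
      ring
    rw [hstep]
    have h2 := sum_rev2 n
    ring_nf
    ring_nf at ih h2 ⊢
    nlinarith [ih, h2]

lemma sum_Icc_dN (c m : ℕ) :
    ∑ a ∈ Icc (c+1) (c+m), ∑ b ∈ Icc (c+1) (c+m), dN a b = f1 m := by
  have himg : Icc (c+1) (c+m) = (range m).image (fun a => a + (c+1)) := by
    ext a
    simp only [Finset.mem_Icc, Finset.mem_image, Finset.mem_range]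
    constructor
    · intro h; exact ⟨a - (c+1), by omega, by omega⟩
    · rintro ⟨b, hb, rfl⟩; omega
  have hinj : ∀ x ∈ range m, ∀ y ∈ range m, x + (c+1) = y + (c+1) → x = y := by
    intro x _ y _ h; omega
  rw [himg, Finset.sum_image hinj]
  unfold f1
  apply Finset.sum_congr rfl
  intro a _
  rw [Finset.sum_image hinj]
  apply Finset.sum_congr rfl
  intro b _
  simp only [dN]
  congr 1
  push_cast
  ring

lemma sum_Icc_dN2 (c m : ℕ) :
    ∑ a ∈ Icc (c+1) (c+m), ∑ b ∈ Icc (c+1) (c+m), dN a b ^ 2 = f2 m := by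
  have himg : Icc (c+1) (c+m) = (range m).image (fun a => a + (c+1)) := by
    ext a
    simp only [Finset.mem_Icc, Finset.mem_image, Finset.mem_range]
    constructor
    · intro h; exact ⟨a - (c+1), by omega, by omega⟩
    · rintro ⟨b, hb, rfl⟩; omega
  have hinj : ∀ x ∈ range m, ∀ y ∈ range m, x + (c+1) = y + (c+1) → x = y := by
    intro x _ y _ h; omega
  rw [himg, Finset.sum_image hinj]
  unfold f2
  apply Finset.sum_congr rfl
  intro a _
  rw [Finset.sum_image hinj]
  apply Finset.sum_congr rfl
  intro b _
  have : dN (a + (c+1)) (b + (c+1)) = dN a b := by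
    simp only [dN]; congr 1; push_cast; ring
  rw [this]



lemma pair_eq {α : Type*} [LinearOrder α] {x y a b a' b' : α}
    (ha : a = x ∨ a = y) (hb : b = x ∨ b = y) (ha' : a' = x ∨ a' = y) (hb' : b' = x ∨ b' = y)
    (hab : a < b) (hab' : a' < b') : a = a' ∧ b = b' := by
  rcases ha with rfl | rfl <;> rcases hb with rfl | rfl <;>
    rcases ha' with rfl | rfl <;> rcases hb' with rfl | rfl <;>
    first
      | exact ⟨rfl, rfl⟩
      | exact absurd hab (lt_irrefl _)
      | exact absurd hab' (lt_irrefl _)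
      | exact absurd hab' (asymm hab)

def cl (m x : ℕ) : ℕ := (x - 1) / m

def Agr {n mm : ℕ} (O : Fin n → Fin mm → ℕ) (i i' : Fin n) : Finset (Fin mm) :=
  Finset.univ.filter fun j => O i j = O i' j

def Prt {n mm : ℕ} (O : Fin n → Fin mm → ℕ) (i : Fin n) : Finset (Fin n) :=
  Finset.univ.filter fun i' => i' ≠ i ∧ (Agr O i i').Nonempty

def cls {n mm : ℕ} (X : Fin n → Fin mm → ℕ) (w : Fin mm → ℕ) : Finset (Fin n) :=
  Finset.univ.filter fun i => ∀ t, cl mm (X i t) = w t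

lemma cls_disj {n mm : ℕ} (X : Fin n → Fin mm → ℕ) (w₁ w₂ : Fin mm → ℕ) (t : Fin mm)
    (h : w₁ t ≠ w₂ t) : Disjoint (cls X w₁) (cls X w₂) := by
  rw [Finset.disjoint_left]
  intro i h1 h2
  simp only [cls, Finset.mem_filter] at h1 h2
  exact h ((h1.2 t).symm.trans (h2.2 t))

section main
variable {m : ℕ} (hm : 2 ≤ m) (X O : Fin (2 * m) → Fin m → ℕ)
  (hX : ∀ j : Fin m, Finset.image (fun i => X i j) Finset.univ = Finset.Icc 1 (2 * m))
  (hO : ∀ i : Fin (2 * m), Finset.image (fun j => O i j) Finset.univ = Finset.Icc 1 m)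
  (hMC : MargCoupled 2 m X O)

include hX in
lemma hXmem : ∀ i j, 1 ≤ X i j ∧ X i j ≤ 2*m := by
  intro i j
  have : X i j ∈ Finset.Icc 1 (2*m) := by
    rw [← hX j]; exact Finset.mem_image_of_mem _ (Finset.mem_univ i)
  simpa [Finset.mem_Icc] using this

include hX in
lemma hXinj : ∀ j, Function.Injective fun i => X i j := by
  intro j
  have hcard : (Finset.univ.image fun i => X i j).card
      = (Finset.univ : Finset (Fin (2*m))).card := by
    rw [hX j]; simp [Nat.card_Icc]
  have h := Finset.injOn_of_card_image_eq hcard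
  intro a b hab
  exact h (Finset.mem_univ a) (Finset.mem_univ b) hab

include hm hX in
lemma cl_le_one : ∀ i t, cl m (X i t) ≤ 1 := by
  intro i t
  have h := hXmem X hX i t
  have h2 : X i t - 1 < 2 * m := by omega
  have h3 : (X i t - 1) / m < 2 := (Nat.div_lt_iff_lt_mul (by omega)).mpr (by omega)
  exact Nat.lt_succ_iff.mp h3

include hm hX in
lemma cl_bounds : ∀ i t, cl m (X i t) * m + 1 ≤ X i t ∧ X i t ≤ cl m (X i t) * m + m := by
  intro i t
  have h := hXmem X hX i t
  have h0 : 0 < m := by omega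
  have hdiv := Nat.div_add_mod' (X i t - 1) m
  have hmod := Nat.mod_lt (X i t - 1) h0
  simp only [cl]
  omega

include hO hMC in
lemma hopp : ∀ i i' (j : Fin m), i ≠ i' → O i j = O i' j →
    ∀ t, cl m (X i t) ≠ cl m (X i' t) := by
  intro i i' j hne hag t
  have hc : O i j ∈ Finset.Icc 1 m := by
    rw [← hO i]; exact Finset.mem_image_of_mem _ (Finset.mem_univ j)
  obtain ⟨hcard, himg⟩ := hMC j t (O i j) hc
  have hiF : i ∈ Finset.univ.filter fun a => O a j = O i j := by simp
  have hi'F : i' ∈ Finset.univ.filter fun a => O a j = O i j := by simp [hag.symm]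
  have hsub : ({i, i'} : Finset (Fin (2*m))) ⊆ Finset.univ.filter fun a => O a j = O i j := by
    intro a ha
    simp only [Finset.mem_insert, Finset.mem_singleton] at ha
    rcases ha with rfl | rfl
    · exact hiF
    · exact hi'F
  have hFeq : (Finset.univ.filter fun a => O a j = O i j) = {i, i'} := by
    apply (Finset.eq_of_subset_of_card_le hsub ?_).symm
    rw [hcard, Finset.card_insert_of_notMem (by simp [hne]), Finset.card_singleton]
  rw [hFeq] at himg
  intro hcontra
  have := congrArg Finset.card himg
  rw [Finset.image_insert, Finset.image_singleton] at this
  simp only [cl] at hcontra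
  rw [hcontra] at this
  simp at this

include hm hX hO hMC in
lemma hopp' : ∀ i i' (j : Fin m), i ≠ i' → O i j = O i' j →
    ∀ t, cl m (X i' t) = 1 - cl m (X i t) := by
  intro i i' j hne hag t
  have h1 := cl_le_one hm X hX i t
  have h2 := cl_le_one hm X hX i' t
  have h3 := hopp X O hO hMC i i' j hne hag t
  omega

omit hm hX in
include hO hMC in
lemma exists_partner : ∀ (i : Fin (2*m)) (j : Fin m),
    ∃ i', i' ≠ i ∧ O i' j = O i j := by
  intro i j
  have hc : O i j ∈ Finset.Icc 1 m := by
    rw [← hO i]; exact Finset.mem_image_of_mem _ (Finset.mem_univ j)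
  have hcard := (hMC j j (O i j) hc).1
  have hiF : i ∈ Finset.univ.filter fun a => O a j = O i j := by simp
  have h1 : ((Finset.univ.filter fun a => O a j = O i j).erase i).Nonempty := by
    rw [← Finset.card_pos, Finset.card_erase_of_mem hiF, hcard]
    norm_num
  obtain ⟨i', hi'⟩ := h1
  rw [Finset.mem_erase, Finset.mem_filter] at hi'
  exact ⟨i', hi'.1, hi'.2.2⟩

omit hm hX in
include hO hMC in
lemma partner_unique : ∀ (i i' i'' : Fin (2*m)) (j : Fin m), i' ≠ i → i'' ≠ i →
    O i' j = O i j → O i'' j = O i j → i' = i'' := by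
  intro i i' i'' j h1 h2 h3 h4
  by_contra hne
  have hc : O i j ∈ Finset.Icc 1 m := by
    rw [← hO i]; exact Finset.mem_image_of_mem _ (Finset.mem_univ j)
  have hcard := (hMC j j (O i j) hc).1
  have hsub : ({i, i', i''} : Finset (Fin (2*m))) ⊆
      Finset.univ.filter fun a => O a j = O i j := by
    intro a ha
    simp only [Finset.mem_insert, Finset.mem_singleton] at ha
    rcases ha with rfl | rfl | rfl <;> simp [h3, h4]
  have h3c : ({i, i', i''} : Finset (Fin (2*m))).card = 3 := by
    rw [Finset.card_insert_of_notMem (by simp [Ne.symm h1, Ne.symm h2]),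
      Finset.card_insert_of_notMem (by simp [hne]), Finset.card_singleton]
  have := Finset.card_le_card hsub
  rw [h3c, hcard] at this
  omega

section ham
variable (hHam : ∀ i i' : Fin (2 * m), i ≠ i' → m - 2 ≤ hamDist O i i')

omit hm hX in
include hHam in
lemma agr_card_le : ∀ i i' : Fin (2*m), i ≠ i' → (Agr O i i').card ≤ 2 := by
  intro i i' hne
  have hpart := Finset.card_filter_add_card_filter_not
    (s := (Finset.univ : Finset (Fin m))) (p := fun j => O i j = O i' j)
  have hham : hamDist O i i' = ((Finset.univ : Finset (Fin m)).filter
      fun j => ¬ O i j = O i' j).card := by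
    simp [hamDist, Ne]
  have hU : (Finset.univ : Finset (Fin m)).card = m := by simp
  have hH := hHam i i' hne
  have := hham ▸ hH
  simp only [Agr]
  omega

omit hm hX in
include hO hMC hHam in
lemma part_sum : ∀ i, ∑ i' ∈ Prt O i, (Agr O i i').card = m := by
  intro i
  have hdisj : ∀ x ∈ Prt O i, ∀ y ∈ Prt O i, x ≠ y → Disjoint (Agr O i x) (Agr O i y) := by
    intro x hx y hy hxy
    rw [Finset.disjoint_left]
    intro j hjx hjy
    simp only [Agr, Finset.mem_filter] at hjx hjy
    simp only [Prt, Finset.mem_filter] at hx hy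
    exact hxy (partner_unique X O hO hMC i x y j hx.2.1 hy.2.1 hjx.2.symm hjy.2.symm)
  have hcover : (Finset.univ : Finset (Fin m)) = (Prt O i).biUnion (Agr O i) := by
    ext j
    simp only [Finset.mem_univ, true_iff, Finset.mem_biUnion]
    obtain ⟨i', hne, hag⟩ := exists_partner X O hO hMC i j
    have hjA : j ∈ Agr O i i' := by simp [Agr, hag.symm]
    refine ⟨i', ?_, hjA⟩
    simp only [Prt, Finset.mem_filter]
    exact ⟨Finset.mem_univ _, hne, ⟨j, hjA⟩⟩
  have := Finset.card_biUnion hdisj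
  rw [← hcover] at this
  simp at this
  exact this.symm

omit hm hX in
include hO hMC hHam in
lemma part_card : ∀ i, m ≤ 2 * (Prt O i).card := by
  intro i
  have hs := part_sum X O hO hMC hHam i
  have hle : ∑ i' ∈ Prt O i, (Agr O i i').card ≤ (Prt O i).card * 2 := by
    have := Finset.sum_le_card_nsmul (Prt O i) (fun i' => (Agr O i i').card) 2 ?_
    · simpa using this
    · intro x hx
      simp only [Prt, Finset.mem_filter] at hx
      exact agr_card_le O hHam i x (Ne.symm hx.2.1)
  omega

include hO hMC in
omit hm hX in
lemma part_sub_cls' (hm : 2 ≤ m)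
    (hX : ∀ j : Fin m, Finset.image (fun i => X i j) Finset.univ = Finset.Icc 1 (2 * m)) :
    ∀ i, Prt O i ⊆ cls X (fun t => 1 - cl m (X i t)) := by
  intro i i' hi'
  simp only [Prt, Finset.mem_filter] at hi'
  obtain ⟨_, hne, j, hj⟩ := hi'
  simp only [Agr, Finset.mem_filter] at hj
  simp only [cls, Finset.mem_filter]
  exact ⟨Finset.mem_univ _, hopp' hm X O hX hO hMC i i' j (Ne.symm hne) hj.2⟩

include hm hX hO hMC hHam in
lemma cls_lb : ∀ i, m ≤ 2 * (cls X (fun t => 1 - cl m (X i t))).card := by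
  intro i
  have h1 := part_card X O hO hMC hHam i
  have h2 := Finset.card_le_card (part_sub_cls' X O hO hMC hm hX i)
  omega

omit hm hX hHam in
include hO in
lemma agr_ham : ∀ i i' : Fin (2*m), (Agr O i i').card + hamDist O i i' = m := by
  intro i i'
  have hpart := Finset.card_filter_add_card_filter_not
    (s := (Finset.univ : Finset (Fin m))) (p := fun j => O i j = O i' j)
  have hham : hamDist O i i' = ((Finset.univ : Finset (Fin m)).filter
      fun j => ¬ O i j = O i' j).card := by
    simp [hamDist, Ne]
  have hU : (Finset.univ : Finset (Fin m)).card = m := by simp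
  simp only [Agr]
  omega

omit hm hX hHam in
include hO hMC in
lemma col_count : ∀ j : Fin m,
    (Finset.univ.filter fun q : Fin (2*m) × Fin (2*m) =>
      q.1 < q.2 ∧ O q.1 j = O q.2 j).card = m := by
  intro j
  have hIcc : (Finset.Icc 1 m).card = m := by simp
  refine Eq.trans ?_ hIcc
  apply Finset.card_nbij (fun q => O q.1 j)
  · intro q hq
    rw [← hO q.1]; exact Finset.mem_image_of_mem _ (Finset.mem_univ j)
  · intro q hq q' hq' heq
    simp only [Finset.coe_filter, Set.mem_setOf_eq, Finset.mem_univ, true_and] at hq hq'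
    have hc : O q.1 j ∈ Finset.Icc 1 m := by
      rw [← hO q.1]; exact Finset.mem_image_of_mem _ (Finset.mem_univ j)
    obtain ⟨x, y, hxy, hF⟩ := Finset.card_eq_two.mp (hMC j j (O q.1 j) hc).1
    have hmem : ∀ a : Fin (2*m), O a j = O q.1 j → (a = x ∨ a = y) := by
      intro a ha
      have : a ∈ Finset.univ.filter fun i => O i j = O q.1 j := by simp [ha]
      rw [hF] at this
      simpa using this
    have h1 := hmem q.1 rfl
    have h2 := hmem q.2 hq.2.symm
    have h3 := hmem q'.1 heq.symm
    have h4 := hmem q'.2 (hq'.2.symm.trans heq.symm)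
    obtain ⟨e1, e2⟩ := pair_eq h1 h2 h3 h4 hq.1 hq'.1
    exact Prod.ext e1 e2
  · intro c hc
    simp only [Finset.coe_Icc, Set.mem_Icc] at hc
    have hc' : c ∈ Finset.Icc 1 m := by simp [hc]
    obtain ⟨x, y, hxy, hF⟩ := Finset.card_eq_two.mp (hMC j j c hc').1
    have hx : O x j = c := by
      have : x ∈ Finset.univ.filter fun i => O i j = c := by rw [hF]; simp
      simpa using this
    have hy : O y j = c := by
      have : y ∈ Finset.univ.filter fun i => O i j = c := by rw [hF]; simp
      simpa using this
    rcases hxy.lt_or_gt with h | h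
    · refine ⟨(x, y), ?_, hx⟩
      simp only [Finset.coe_filter, Set.mem_setOf_eq, Finset.mem_univ, true_and]
      exact ⟨h, hx.trans hy.symm⟩
    · refine ⟨(y, x), ?_, hy⟩
      simp only [Finset.coe_filter, Set.mem_setOf_eq, Finset.mem_univ, true_and]
      exact ⟨h, hy.trans hx.symm⟩

include hO hMC hHam in
omit hX in
lemma exists_one
    (hcount : 2 * (Finset.univ.filter fun q : Fin (2 * m) × Fin (2 * m) =>
        q.1 < q.2 ∧ hamDist O q.1 q.2 = m - 2).card < m ^ 2) :
    ∃ p : Fin (2*m) × Fin (2*m), p.1 < p.2 ∧ (Agr O p.1 p.2).card = 1 := by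
  by_contra hno
  push_neg at hno
  have hq : ∀ q : Fin (2*m) × Fin (2*m),
      (Finset.univ.filter fun j => q.1 < q.2 ∧ O q.1 j = O q.2 j).card
      = if q.1 < q.2 ∧ hamDist O q.1 q.2 = m - 2 then 2 else 0 := by
    intro q
    by_cases hlt : q.1 < q.2
    · have hfe : (Finset.univ.filter fun j => q.1 < q.2 ∧ O q.1 j = O q.2 j)
          = Agr O q.1 q.2 := by
        simp only [Agr]
        apply Finset.filter_congr
        intro j _
        simp [hlt]
      rw [hfe]
      have hsum := agr_ham O hO q.1 q.2
      have hH := hHam q.1 q.2 (ne_of_lt hlt)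
      have hne1 := hno q hlt
      by_cases hc2 : (Agr O q.1 q.2).card = 2
      · have hham2 : hamDist O q.1 q.2 = m - 2 := by omega
        simp [hlt, hham2, hc2]
      · have hc0 : (Agr O q.1 q.2).card = 0 := by omega
        have hham0 : ¬ (hamDist O q.1 q.2 = m - 2) := by omega
        simp [hlt, hham0, hc0]
    · have h0 : (Finset.univ.filter fun j : Fin m =>
          q.1 < q.2 ∧ O q.1 j = O q.2 j) = ∅ := by
        apply Finset.filter_false_of_mem
        intro j _
        simp [hlt]
      rw [h0]
      simp [hlt]
  have hswap : ∑ j : Fin m, (Finset.univ.filter fun q : Fin (2*m) × Fin (2*m) =>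
        q.1 < q.2 ∧ O q.1 j = O q.2 j).card
      = ∑ q : Fin (2*m) × Fin (2*m),
        (Finset.univ.filter fun j : Fin m => q.1 < q.2 ∧ O q.1 j = O q.2 j).card := by
    simp only [Finset.card_filter]
    rw [Finset.sum_comm]
  have hcols : ∑ j : Fin m, (Finset.univ.filter fun q : Fin (2*m) × Fin (2*m) =>
        q.1 < q.2 ∧ O q.1 j = O q.2 j).card = m * m := by
    rw [Finset.sum_congr rfl fun j _ => col_count X O hO hMC j]
    simp [Finset.card_univ, mul_comm]
  have hsum2 : ∑ q : Fin (2*m) × Fin (2*m),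
      (Finset.univ.filter fun j : Fin m => q.1 < q.2 ∧ O q.1 j = O q.2 j).card
      = 2 * (Finset.univ.filter fun q : Fin (2 * m) × Fin (2 * m) =>
        q.1 < q.2 ∧ hamDist O q.1 q.2 = m - 2).card := by
    rw [Finset.sum_congr rfl fun q _ => hq q]
    rw [Finset.sum_ite, Finset.sum_const, Finset.sum_const_zero, add_zero, smul_eq_mul]
    rw [mul_comm]
  have : m * m = 2 * (Finset.univ.filter fun q : Fin (2 * m) × Fin (2 * m) =>
      q.1 < q.2 ∧ hamDist O q.1 q.2 = m - 2).card := by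
    rw [← hcols, hswap, hsum2]
  rw [pow_two] at hcount
  omega

include hm hX hO hMC hHam in
lemma class_full
    (hcount : 2 * (Finset.univ.filter fun q : Fin (2 * m) × Fin (2 * m) =>
        q.1 < q.2 ∧ hamDist O q.1 q.2 = m - 2).card < m ^ 2) :
    ∃ v : Fin m → ℕ, (∀ t, v t ≤ 1) ∧ (cls X v).card = m := by
  obtain ⟨p, hlt, hA1⟩ := exists_one X O hO hMC hHam hcount
  set i₀ := p.1
  set i₁ := p.2
  have hne : i₀ ≠ i₁ := ne_of_lt hlt
  -- refined partner bound for a row with a multiplicity-1 partner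
  have refined : ∀ a b : Fin (2*m), a ≠ b → (Agr O a b).card = 1 →
      m + 1 ≤ 2 * (Prt O a).card := by
    intro a b hab h1
    have hbmem : b ∈ Prt O a := by
      simp only [Prt, Finset.mem_filter]
      refine ⟨Finset.mem_univ _, Ne.symm hab, ?_⟩
      rw [← Finset.card_pos, h1]; norm_num
    have hsum := part_sum X O hO hMC hHam a
    rw [← Finset.add_sum_erase _ _ hbmem] at hsum
    have hrest : ∑ x ∈ (Prt O a).erase b, (Agr O a x).card
        ≤ ((Prt O a).erase b).card * 2 := by
      have := Finset.sum_le_card_nsmul ((Prt O a).erase b)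
        (fun x => (Agr O a x).card) 2 ?_
      · simpa using this
      · intro x hx
        have hx' := Finset.mem_of_mem_erase hx
        simp only [Prt, Finset.mem_filter] at hx'
        exact agr_card_le O hHam a x (Ne.symm hx'.2.1)
    rw [Finset.card_erase_of_mem hbmem] at hrest
    have hpos : 1 ≤ (Prt O a).card := Finset.card_pos.mpr ⟨b, hbmem⟩
    omega
  have hA1' : (Agr O i₁ i₀).card = 1 := by
    have : Agr O i₁ i₀ = Agr O i₀ i₁ := by
      simp only [Agr]
      apply Finset.filter_congr
      intro j _
      exact ⟨fun h => h.symm, fun h => h.symm⟩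
    rw [this, hA1]
  have hb0 := refined i₀ i₁ hne hA1
  have hb1 := refined i₁ i₀ (Ne.symm hne) hA1'
  -- the two main classes
  set v : Fin m → ℕ := fun t => cl m (X i₀ t) with hv
  set vb : Fin m → ℕ := fun t => 1 - v t with hvb
  have hv1 : ∀ t, v t ≤ 1 := fun t => cl_le_one hm X hX i₀ t
  have hclsvb : m + 1 ≤ 2 * (cls X vb).card := by
    have hsub := part_sub_cls' X O hO hMC hm hX i₀
    rw [show (fun t => 1 - cl m (X i₀ t)) = vb from rfl] at hsub
    have := Finset.card_le_card hsub
    omega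
  have hi₁cl : ∀ t, cl m (X i₁ t) = vb t := by
    obtain ⟨j, hj⟩ : (Agr O i₀ i₁).Nonempty := by
      rw [← Finset.card_pos, hA1]; norm_num
    simp only [Agr, Finset.mem_filter] at hj
    exact hopp' hm X O hX hO hMC i₀ i₁ j hne hj.2
  have hclsv : m + 1 ≤ 2 * (cls X v).card := by
    have hsub := part_sub_cls' X O hO hMC hm hX i₁
    have heqf : (fun t => 1 - cl m (X i₁ t)) = v := by
      funext t
      have h1 := hi₁cl t
      have h2 := hv1 t
      have e1 : vb t = 1 - v t := rfl
      omega
    rw [heqf] at hsub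
    have := Finset.card_le_card hsub
    omega
  -- no third class
  have t0 : Fin m := ⟨0, by omega⟩
  have hall : ∀ i : Fin (2*m), (∀ t, cl m (X i t) = v t) ∨ (∀ t, cl m (X i t) = vb t) := by
    intro w
    by_contra hw
    push_neg at hw
    obtain ⟨hw1, hw2⟩ := hw
    obtain ⟨t1, ht1⟩ := hw1
    obtain ⟨t2, ht2⟩ := hw2
    set u : Fin m → ℕ := fun t => cl m (X w t) with hu
    set ub : Fin m → ℕ := fun t => 1 - u t with hub
    have hu1 : ∀ t, u t ≤ 1 := fun t => cl_le_one hm X hX w t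
    have hclsub : m ≤ 2 * (cls X ub).card := cls_lb hm X O hX hO hMC hHam w
    have hwit : (cls X ub).Nonempty := by
      rw [← Finset.card_pos]; omega
    obtain ⟨w', hw'⟩ := hwit
    have hw'cl : ∀ t, cl m (X w' t) = ub t := by
      simp only [cls, Finset.mem_filter] at hw'
      exact hw'.2
    have hclsu : m ≤ 2 * (cls X u).card := by
      have h := cls_lb hm X O hX hO hMC hHam w'
      have heqf : (fun t => 1 - cl m (X w' t)) = u := by
        funext t
        have h1 := hw'cl t
        have h2 := hu1 t
        have e1 : ub t = 1 - u t := rfl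
        omega
      rw [heqf] at h
      exact h
    -- pairwise disjointness
    have d_v_vb : Disjoint (cls X v) (cls X vb) := by
      apply cls_disj X v vb t0
      have := hv1 t0
      simp only [hvb]
      omega
    have d_v_u : Disjoint (cls X v) (cls X u) :=
      cls_disj X v u t1 (fun h => ht1 (h.symm))
    have d_v_ub : Disjoint (cls X v) (cls X ub) := by
      by_cases hvu : ∀ t, v t = ub t
      · exfalso
        apply ht2
        have h1 := hvu t2
        have h2 := hu1 t2
        have h3 := hv1 t2
        have e1 : ub t2 = 1 - u t2 := rfl
        have e2 : vb t2 = 1 - v t2 := rfl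
        show u t2 = vb t2
        omega
      · push_neg at hvu
        obtain ⟨t, ht⟩ := hvu
        exact cls_disj X v ub t ht
    have d_vb_u : Disjoint (cls X vb) (cls X u) := by
      by_cases hvu : ∀ t, vb t = u t
      · exact absurd (hvu t2).symm ht2
      · push_neg at hvu
        obtain ⟨t, ht⟩ := hvu
        exact cls_disj X vb u t ht
    have d_vb_ub : Disjoint (cls X vb) (cls X ub) := by
      by_cases hvu : ∀ t, vb t = ub t
      · exfalso
        apply ht1
        have h1 := hvu t1
        have h2 := hu1 t1
        have h3 := hv1 t1
        have e1 : ub t1 = 1 - u t1 := rfl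
        have e2 : vb t1 = 1 - v t1 := rfl
        show u t1 = v t1
        omega
      · push_neg at hvu
        obtain ⟨t, ht⟩ := hvu
        exact cls_disj X vb ub t ht
    have d_u_ub : Disjoint (cls X u) (cls X ub) := by
      apply cls_disj X u ub t0
      have := hu1 t0
      simp only [hub]
      omega
    -- card bound
    have hc1 : ((cls X v ∪ cls X vb).card : ℕ)
        = (cls X v).card + (cls X vb).card :=
      Finset.card_union_of_disjoint d_v_vb
    have hd2 : Disjoint (cls X v ∪ cls X vb) (cls X u) :=
      Finset.disjoint_union_left.mpr ⟨d_v_u, d_vb_u⟩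
    have hc2 : ((cls X v ∪ cls X vb ∪ cls X u).card : ℕ)
        = (cls X v ∪ cls X vb).card + (cls X u).card :=
      Finset.card_union_of_disjoint hd2
    have hd3 : Disjoint (cls X v ∪ cls X vb ∪ cls X u) (cls X ub) :=
      Finset.disjoint_union_left.mpr
        ⟨Finset.disjoint_union_left.mpr ⟨d_v_ub, d_vb_ub⟩, d_u_ub⟩
    have hc3 : ((cls X v ∪ cls X vb ∪ cls X u ∪ cls X ub).card : ℕ)
        = (cls X v ∪ cls X vb ∪ cls X u).card + (cls X ub).card :=
      Finset.card_union_of_disjoint hd3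
    have hcle : (cls X v ∪ cls X vb ∪ cls X u ∪ cls X ub).card ≤ 2 * m := by
      have := Finset.card_le_univ (cls X v ∪ cls X vb ∪ cls X u ∪ cls X ub)
      simpa using this
    omega
  -- the two classes partition everything
  have hcover : cls X v ∪ cls X vb = Finset.univ := by
    ext i
    simp only [Finset.mem_union, Finset.mem_univ, iff_true, cls, Finset.mem_filter]
    rcases hall i with h | h
    · exact Or.inl ⟨trivial, h⟩
    · exact Or.inr ⟨trivial, h⟩
  have d_v_vb : Disjoint (cls X v) (cls X vb) := by
    apply cls_disj X v vb t0
    have := hv1 t0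
    simp only [hvb]
    omega
  have htot : (cls X v).card + (cls X vb).card = 2 * m := by
    rw [← Finset.card_union_of_disjoint d_v_vb, hcover]
    simp
  -- column balance at t0
  have hhalf : (Finset.univ.filter fun i : Fin (2*m) => X i t0 ≤ m).card = m := by
    have himg : (Finset.Icc 1 (2*m)).filter (fun x => x ≤ m)
        = Finset.image (fun i => X i t0)
          (Finset.univ.filter fun i : Fin (2*m) => X i t0 ≤ m) := by
      rw [← hX t0]
      exact Finset.filter_image
    have hIeq : (Finset.Icc 1 (2*m)).filter (fun x => x ≤ m) = Finset.Icc 1 m := by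
      ext a
      simp only [Finset.mem_filter, Finset.mem_Icc]
      omega
    have hinj : Set.InjOn (fun i => X i t0)
        ↑(Finset.univ.filter fun i : Fin (2*m) => X i t0 ≤ m) :=
      (hXinj X hX t0).injOn
    have := Finset.card_image_of_injOn hinj
    rw [← himg, hIeq] at this
    rw [← this]
    simp
  have hhalf' : (Finset.univ.filter fun i : Fin (2*m) => ¬ X i t0 ≤ m).card = m := by
    have := Finset.card_filter_add_card_filter_not
      (s := (Finset.univ : Finset (Fin (2*m)))) (p := fun i => X i t0 ≤ m)
    have hU : (Finset.univ : Finset (Fin (2*m))).card = 2*m := by simp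
    omega
  refine ⟨v, hv1, ?_⟩
  have e1 : vb t0 = 1 - v t0 := rfl
  rcases Nat.le_one_iff_eq_zero_or_eq_one.mp (hv1 t0) with hb | hb
  · have hs1 : cls X v ⊆ Finset.univ.filter fun i => X i t0 ≤ m := by
      intro i hi
      simp only [cls, Finset.mem_filter] at hi
      have h1 := hi.2 t0
      have h2 := cl_bounds hm X hX i t0
      rw [h1, hb] at h2
      simp only [Finset.mem_filter]
      exact ⟨Finset.mem_univ _, by omega⟩
    have hs2 : cls X vb ⊆ Finset.univ.filter fun i => ¬ X i t0 ≤ m := by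
      intro i hi
      simp only [cls, Finset.mem_filter] at hi
      have h1 := hi.2 t0
      have h2 := cl_bounds hm X hX i t0
      rw [h1, e1, hb] at h2
      simp only [Finset.mem_filter]
      refine ⟨Finset.mem_univ _, by omega⟩
    have hc1 := Finset.card_le_card hs1
    have hc2 := Finset.card_le_card hs2
    omega
  · have hs1 : cls X v ⊆ Finset.univ.filter fun i => ¬ X i t0 ≤ m := by
      intro i hi
      simp only [cls, Finset.mem_filter] at hi
      have h1 := hi.2 t0
      have h2 := cl_bounds hm X hX i t0
      rw [h1, hb] at h2
      simp only [Finset.mem_filter]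
      exact ⟨Finset.mem_univ _, by omega⟩
    have hs2 : cls X vb ⊆ Finset.univ.filter fun i => X i t0 ≤ m := by
      intro i hi
      simp only [cls, Finset.mem_filter] at hi
      have h1 := hi.2 t0
      have h2 := cl_bounds hm X hX i t0
      rw [h1, e1, hb] at h2
      simp only [Finset.mem_filter]
      refine ⟨Finset.mem_univ _, by omega⟩
    have hc1 := Finset.card_le_card hs1
    have hc2 := Finset.card_le_card hs2
    omega

include hm hX hO hMC hHam in
lemma key_setup
    (hcount : 2 * (Finset.univ.filter fun q : Fin (2 * m) × Fin (2 * m) =>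
        q.1 < q.2 ∧ hamDist O q.1 q.2 = m - 2).card < m ^ 2) :
    ∃ S : Finset (Fin (2*m)), S.card = m ∧
      (∀ t : Fin m, ∑ i ∈ S, ∑ i' ∈ S, dN (X i t) (X i' t) = f1 m) ∧
      (∀ t : Fin m, ∑ i ∈ S, ∑ i' ∈ S, dN (X i t) (X i' t) ^ 2 = f2 m) := by
  obtain ⟨v, hv1, hScard⟩ := class_full hm X O hX hO hMC hHam hcount
  set S := cls X v with hS
  have himage : ∀ t : Fin m, S.image (fun i => X i t)
      = Finset.Icc (v t * m + 1) (v t * m + m) := by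
    intro t
    apply Finset.eq_of_subset_of_card_le
    · intro x hx
      obtain ⟨i, hi, rfl⟩ := Finset.mem_image.mp hx
      simp only [hS, cls, Finset.mem_filter] at hi
      have h1 := hi.2 t
      have h2 := cl_bounds hm X hX i t
      rw [h1] at h2
      simp only [Finset.mem_Icc]
      omega
    · have hc1 : (S.image fun i => X i t).card = m := by
        rw [Finset.card_image_of_injOn (hXinj X hX t).injOn, hScard]
      rw [hc1, Nat.card_Icc]
      omega
  have hinj2 : ∀ t : Fin m, ∀ x ∈ S, ∀ y ∈ S, X x t = X y t → x = y :=
    fun t x _ y _ h => hXinj X hX t h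
  refine ⟨S, hScard, fun t => ?_, fun t => ?_⟩
  · have step1 : ∑ i ∈ S, ∑ i' ∈ S, dN (X i t) (X i' t)
        = ∑ a ∈ S.image (fun i => X i t), ∑ b ∈ S.image (fun i => X i t), dN a b := by
      rw [Finset.sum_image (hinj2 t)]
      refine Finset.sum_congr rfl fun i _ => ?_
      rw [Finset.sum_image (hinj2 t)]
    rw [step1, himage t]
    exact sum_Icc_dN (v t * m) m
  · have step1 : ∑ i ∈ S, ∑ i' ∈ S, dN (X i t) (X i' t) ^ 2
        = ∑ a ∈ S.image (fun i => X i t), ∑ b ∈ S.image (fun i => X i t), dN a b ^ 2 := by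
      rw [Finset.sum_image (hinj2 t)]
      refine Finset.sum_congr rfl fun i _ => ?_
      rw [Finset.sum_image (hinj2 t)]
    rw [step1, himage t]
    exact sum_Icc_dN2 (v t * m) m

end ham
end main
end S18

/-- let `m ≥ 2`, `n = 2m`, `X` an `n × m` Latin hypercube design, `O` an
`n × m` matrix each of whose rows is a permutation of `{1,…,m}`, with `(X, O)`
marginally coupled (`k = 2`).  If every pair of distinct rows of `O` has Hamming
distance at least `m - 2` and the number of unordered pairs of distinct rows of `O`
with Hamming distance exactly `m - 2` is less than `m²/2`, then some pair of distinct
rows of `X` has `L1`-distance at most `⌊(m+1)m/3⌋`, and some pair of distinct rows of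
`X` has squared `L2`-distance at most `⌊m²(m+1)/6⌋`. -/
theorem stmt_18 (m : ℕ) (hm : 2 ≤ m)
    (X O : Fin (2 * m) → Fin m → ℕ)
    (hX : ∀ j : Fin m, Finset.image (fun i => X i j) Finset.univ = Finset.Icc 1 (2 * m))
    (hO : ∀ i : Fin (2 * m), Finset.image (fun j => O i j) Finset.univ = Finset.Icc 1 m)
    (hMC : MargCoupled 2 m X O)
    (hHam : ∀ i i' : Fin (2 * m), i ≠ i' → m - 2 ≤ hamDist O i i')
    (hcount : 2 * (Finset.univ.filter fun q : Fin (2 * m) × Fin (2 * m) =>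
        q.1 < q.2 ∧ hamDist O q.1 q.2 = m - 2).card < m ^ 2) :
    (∃ i i' : Fin (2 * m), i ≠ i' ∧
        (∑ k : Fin m, ((X i k : ℤ) - (X i' k : ℤ)).natAbs) ≤ (m + 1) * m / 3) ∧
    (∃ i i' : Fin (2 * m), i ≠ i' ∧
        (∑ k : Fin m, ((X i k : ℤ) - (X i' k : ℤ)).natAbs ^ 2) ≤ m ^ 2 * (m + 1) / 6) := by
  obtain ⟨S, hScard, hsum1, hsum2⟩ := S18.key_setup hm X O hX hO hMC hHam hcount
  have hTot1 : ∑ i ∈ S, ∑ i' ∈ S, ∑ t : Fin m, S18.dN (X i t) (X i' t) = m * S18.f1 m := by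
    have hswap : ∑ i ∈ S, ∑ i' ∈ S, ∑ t : Fin m, S18.dN (X i t) (X i' t)
        = ∑ t : Fin m, ∑ i ∈ S, ∑ i' ∈ S, S18.dN (X i t) (X i' t) :=
      calc ∑ i ∈ S, ∑ i' ∈ S, ∑ t : Fin m, S18.dN (X i t) (X i' t)
          = ∑ i ∈ S, ∑ t : Fin m, ∑ i' ∈ S, S18.dN (X i t) (X i' t) :=
            Finset.sum_congr rfl fun i _ => Finset.sum_comm
        _ = ∑ t : Fin m, ∑ i ∈ S, ∑ i' ∈ S, S18.dN (X i t) (X i' t) :=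
            Finset.sum_comm
    rw [hswap, Finset.sum_congr rfl fun t _ => hsum1 t]
    simp [mul_comm]
  have hTot2 : ∑ i ∈ S, ∑ i' ∈ S, ∑ t : Fin m, S18.dN (X i t) (X i' t) ^ 2
      = m * S18.f2 m := by
    have hswap : ∑ i ∈ S, ∑ i' ∈ S, ∑ t : Fin m, S18.dN (X i t) (X i' t) ^ 2
        = ∑ t : Fin m, ∑ i ∈ S, ∑ i' ∈ S, S18.dN (X i t) (X i' t) ^ 2 :=
      calc ∑ i ∈ S, ∑ i' ∈ S, ∑ t : Fin m, S18.dN (X i t) (X i' t) ^ 2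
          = ∑ i ∈ S, ∑ t : Fin m, ∑ i' ∈ S, S18.dN (X i t) (X i' t) ^ 2 :=
            Finset.sum_congr rfl fun i _ => Finset.sum_comm
        _ = ∑ t : Fin m, ∑ i ∈ S, ∑ i' ∈ S, S18.dN (X i t) (X i' t) ^ 2 :=
            Finset.sum_comm
    rw [hswap, Finset.sum_congr rfl fun t _ => hsum2 t]
    simp [mul_comm]
  constructor
  · by_contra hno
    push_neg at hno
    set q := (m + 1) * m / 3 with hq
    have hlow : m * ((m - 1) * (q + 1)) ≤ ∑ i ∈ S, ∑ i' ∈ S, ∑ t : Fin m, S18.dN (X i t) (X i' t) := by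
      have hper : ∀ i ∈ S, (m - 1) * (q + 1) ≤ ∑ i' ∈ S, ∑ t : Fin m, S18.dN (X i t) (X i' t) := by
        intro i hi
        have h1 : ((S.erase i).card) • (q + 1)
            ≤ ∑ i' ∈ S.erase i, ∑ t : Fin m, S18.dN (X i t) (X i' t) := by
          apply Finset.card_nsmul_le_sum
          intro i' hi'
          have hne := (Finset.mem_erase.mp hi').1
          have := hno i i' (Ne.symm hne)
          exact this
        have h2 : ∑ i' ∈ S.erase i, ∑ t : Fin m, S18.dN (X i t) (X i' t)
            ≤ ∑ i' ∈ S, ∑ t : Fin m, S18.dN (X i t) (X i' t) :=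
          Finset.sum_le_sum_of_subset (Finset.erase_subset _ _)
        rw [Finset.card_erase_of_mem hi, hScard] at h1
        simpa using le_trans h1 h2
      calc m * ((m - 1) * (q + 1)) = ∑ _i ∈ S, (m - 1) * (q + 1) := by
            rw [Finset.sum_const, hScard, smul_eq_mul]
        _ ≤ _ := Finset.sum_le_sum hper
    rw [hTot1] at hlow
    have hf := S18.f1_eq m
    have hq3 : (m + 1) * m + 1 ≤ 3 * (q + 1) := by
      have hd := Nat.div_add_mod ((m + 1) * m) 3
      have hmod : (m + 1) * m % 3 < 3 := Nat.mod_lt _ (by norm_num)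
      omega
    obtain ⟨k, rfl⟩ : ∃ k, m = k + 2 := ⟨m - 2, by omega⟩
    have hm1 : k + 2 - 1 = k + 1 := rfl
    rw [hm1] at hlow
    nlinarith [hlow, hf, hq3, Nat.mul_le_mul_left ((k+1)*(k+2)) hq3]
  · by_contra hno
    push_neg at hno
    set q := m ^ 2 * (m + 1) / 6 with hq
    have hlow : m * ((m - 1) * (q + 1)) ≤ ∑ i ∈ S, ∑ i' ∈ S, ∑ t : Fin m, S18.dN (X i t) (X i' t) ^ 2 := by
      have hper : ∀ i ∈ S, (m - 1) * (q + 1) ≤ ∑ i' ∈ S, ∑ t : Fin m, S18.dN (X i t) (X i' t) ^ 2 := by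
        intro i hi
        have h1 : ((S.erase i).card) • (q + 1)
            ≤ ∑ i' ∈ S.erase i, ∑ t : Fin m, S18.dN (X i t) (X i' t) ^ 2 := by
          apply Finset.card_nsmul_le_sum
          intro i' hi'
          have hne := (Finset.mem_erase.mp hi').1
          have := hno i i' (Ne.symm hne)
          exact this
        have h2 : ∑ i' ∈ S.erase i, ∑ t : Fin m, S18.dN (X i t) (X i' t) ^ 2
            ≤ ∑ i' ∈ S, ∑ t : Fin m, S18.dN (X i t) (X i' t) ^ 2 :=
          Finset.sum_le_sum_of_subset (Finset.erase_subset _ _)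
        rw [Finset.card_erase_of_mem hi, hScard] at h1
        simpa using le_trans h1 h2
      calc m * ((m - 1) * (q + 1)) = ∑ _i ∈ S, (m - 1) * (q + 1) := by
            rw [Finset.sum_const, hScard, smul_eq_mul]
        _ ≤ _ := Finset.sum_le_sum hper
    rw [hTot2] at hlow
    have hf := S18.f2_eq m
    have hq3 : m ^ 2 * (m + 1) + 1 ≤ 6 * (q + 1) := by
      have hd := Nat.div_add_mod (m ^ 2 * (m + 1)) 6
      have hmod : m ^ 2 * (m + 1) % 6 < 6 := Nat.mod_lt _ (by norm_num)
      omega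
    obtain ⟨k, rfl⟩ : ∃ k, m = k + 2 := ⟨m - 2, by omega⟩
    have hm1 : k + 2 - 1 = k + 1 := rfl
    rw [hm1] at hlow
    nlinarith [hlow, hf, hq3, Nat.mul_le_mul_left ((k+1)*(k+2)) hq3]
end
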